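/- arXiv:1805.08354 — 7 statements merged into one kernel-verified Lean document; each statement's English description precedes it below -/
import Mathlib

section
/- Let r₁, r₂, r₃ > 0 and Θ₁, Θ₂, Θ₃ ∈ [0, π) with Θ₁ + Θ₂ + Θ₃ < π. For each permutation {i,j,k} = {1,2,3} set dₖ = arcosh(cosh rᵢ · cosh rⱼ + cos Θₖ · sinh rᵢ · sinh rⱼ). Then each dₖ > 0 and the three numbers d₁, d₂, d₃ satisfy the strict triangle inequalities d₁ < d₂ + d₃, d₂ < d₃ + d₁, d₃ < d₁ + d₂. (This encodes the existence of a configuration of three mutually intersecting closed disks in hyperbolic geometry with radii r₁, r₂, r₃ and exterior intersection angles Θ₁, Θ₂, Θ₃.) -/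
/-- The inverse hyperbolic cosine: `arcosh x = log (x + √(x² − 1))` for `x ≥ 1`. -/
noncomputable def arcosh (x : ℝ) : ℝ := Real.log (x + Real.sqrt (x ^ 2 - 1))

/-- The hyperbolic distance between the centers of two hyperbolic disks of radii
`r (k+1)`, `r (k+2)` meeting at exterior intersection angle `Θ k`, given by the
hyperbolic cosine law. -/
noncomputable def dist3 (Θ r : Fin 3 → ℝ) (k : Fin 3) : ℝ :=
  arcosh (Real.cosh (r (k + 1)) * Real.cosh (r (k + 2)) +
    Real.cos (Θ k) * Real.sinh (r (k + 1)) * Real.sinh (r (k + 2)))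

lemma arcosh_one : arcosh 1 = 0 := by
  simp [arcosh]

lemma arcosh_lt_arcosh {x y : ℝ} (hx : 1 ≤ x) (h : x < y) : arcosh x < arcosh y := by
  have hx0 : 0 < x + Real.sqrt (x ^ 2 - 1) :=
    add_pos_of_pos_of_nonneg (by linarith) (Real.sqrt_nonneg _)
  refine Real.log_lt_log hx0 ?_
  have hs : Real.sqrt (x ^ 2 - 1) ≤ Real.sqrt (y ^ 2 - 1) :=
    Real.sqrt_le_sqrt (by nlinarith)
  linarith

lemma arcosh_pos {x : ℝ} (hx : 1 < x) : 0 < arcosh x := by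
  have := arcosh_lt_arcosh le_rfl hx
  rwa [arcosh_one] at this

lemma cosh_arcosh {x : ℝ} (hx : 1 ≤ x) : Real.cosh (arcosh x) = x := by
  have h1 : 0 ≤ x ^ 2 - 1 := by nlinarith
  have hs := Real.sq_sqrt h1
  have hy : 0 < x + Real.sqrt (x ^ 2 - 1) :=
    add_pos_of_pos_of_nonneg (by linarith) (Real.sqrt_nonneg _)
  rw [arcosh, Real.cosh_eq, Real.exp_log hy, Real.exp_neg, Real.exp_log hy]
  field_simp
  nlinarith [hs]

lemma sinh_arcosh {x : ℝ} (hx : 1 ≤ x) : Real.sinh (arcosh x) = Real.sqrt (x ^ 2 - 1) := by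
  have h1 : 0 ≤ x ^ 2 - 1 := by nlinarith
  have hs := Real.sq_sqrt h1
  have hy : 0 < x + Real.sqrt (x ^ 2 - 1) :=
    add_pos_of_pos_of_nonneg (by linarith) (Real.sqrt_nonneg _)
  rw [arcosh, Real.sinh_eq, Real.exp_log hy, Real.exp_neg, Real.exp_log hy]
  field_simp
  nlinarith [hs]

lemma arcosh_cosh {t : ℝ} (ht : 0 ≤ t) : arcosh (Real.cosh t) = t := by
  have h : Real.cosh t ^ 2 - 1 = Real.sinh t ^ 2 := by
    have := Real.cosh_sq_sub_sinh_sq t; nlinarith [this]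
  rw [arcosh, h, Real.sqrt_sq (Real.sinh_nonneg_iff.mpr ht), Real.cosh_add_sinh, Real.log_exp]

lemma one_lt_c {a b θ : ℝ} (ha : 0 < a) (hb : 0 < b) (hθ0 : 0 ≤ θ) (hθπ : θ < Real.pi) :
    1 < Real.cosh a * Real.cosh b + Real.cos θ * Real.sinh a * Real.sinh b := by
  have h1 : Real.cos Real.pi < Real.cos θ :=
    Real.cos_lt_cos_of_nonneg_of_le_pi hθ0 le_rfl hθπ
  rw [Real.cos_pi] at h1
  have hsa : 0 < Real.sinh a := Real.sinh_pos_iff.mpr ha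
  have hsb : 0 < Real.sinh b := Real.sinh_pos_iff.mpr hb
  have h2 := Real.one_le_cosh (a - b)
  rw [Real.cosh_sub] at h2
  nlinarith [mul_pos (show (0:ℝ) < Real.cos θ + 1 by linarith) (mul_pos hsa hsb)]

set_option maxHeartbeats 1000000 in
/-- Positivity of the Gram determinant, in purely atomic form. -/
lemma gram_pos (A B C α β γ x y z s₁ s₂ s₃ : ℝ)
    (hA2 : A ^ 2 - α ^ 2 = 1) (hB2 : B ^ 2 - β ^ 2 = 1) (hC2 : C ^ 2 - γ ^ 2 = 1)
    (h1 : s₁ ^ 2 + x ^ 2 = 1) (h2 : s₂ ^ 2 + y ^ 2 = 1) (h3 : s₃ ^ 2 + z ^ 2 = 1)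
    (hA : 0 < A) (hB : 0 < B) (hC : 0 < C)
    (hα : 0 < α) (hβ : 0 < β) (hγ : 0 < γ)
    (hs1 : 0 ≤ s₁) (hs2 : 0 ≤ s₂) (hs3 : 0 ≤ s₃)
    (hx : s₂ * s₃ - y * z < x) (hy : s₁ * s₃ - x * z < y) (hz : s₁ * s₂ - x * y < z) :
    0 < 1 + 2 * (B * C + x * β * γ) * (C * A + y * γ * α) * (A * B + z * α * β) -
      (B * C + x * β * γ) ^ 2 - (C * A + y * γ * α) ^ 2 - (A * B + z * α * β) ^ 2 := by
  have e : 1 + 2 * (B * C + x * β * γ) * (C * A + y * γ * α) * (A * B + z * α * β) -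
      (B * C + x * β * γ) ^ 2 - (C * A + y * γ * α) ^ 2 - (A * B + z * α * β) ^ 2 =
      (s₁ * β * γ) ^ 2 + (s₂ * α * γ) ^ 2 + (s₃ * α * β) ^ 2 +
        2 * α ^ 2 * β ^ 2 * γ ^ 2 * (1 + x * y * z) +
        2 * B * C * α ^ 2 * β * γ * (x + y * z) +
        2 * A * C * α * β ^ 2 * γ * (y + x * z) +
        2 * A * B * α * β * γ ^ 2 * (z + x * y) := by
    linear_combination (2 * B ^ 2 * C ^ 2 - B ^ 2 - C ^ 2 + 2 * B * C * β * γ * x) * hA2 +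
      (C ^ 2 + 2 * C ^ 2 * α ^ 2 + 2 * A * C * α * γ * y - 1 - α ^ 2) * hB2 +
      (α ^ 2 + β ^ 2 + 2 * α ^ 2 * β ^ 2 + 2 * A * B * α * β * z) * hC2 -
      β ^ 2 * γ ^ 2 * h1 - α ^ 2 * γ ^ 2 * h2 - α ^ 2 * β ^ 2 * h3
  rw [e]; clear e
  have hx2 : x ^ 2 ≤ 1 := by nlinarith [sq_nonneg s₁]
  have hy2 : y ^ 2 ≤ 1 := by nlinarith [sq_nonneg s₂]
  have hz2 : z ^ 2 ≤ 1 := by nlinarith [sq_nonneg s₃]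
  have hxyz : 0 ≤ 1 + x * y * z := by
    have hxy2 : x ^ 2 * y ^ 2 ≤ 1 := by nlinarith [sq_nonneg x, sq_nonneg y]
    nlinarith [sq_nonneg (x * y + z), hxy2]
  have hxp : 0 < x + y * z := by nlinarith [mul_nonneg hs2 hs3]
  have hyp : 0 < y + x * z := by nlinarith [mul_nonneg hs1 hs3]
  have hzp : 0 < z + x * y := by nlinarith [mul_nonneg hs1 hs2]
  have t4 : 0 ≤ 2 * α ^ 2 * β ^ 2 * γ ^ 2 * (1 + x * y * z) := by positivity
  have t5 : 0 < 2 * B * C * α ^ 2 * β * γ * (x + y * z) := by positivity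
  have t6 : 0 < 2 * A * C * α * β ^ 2 * γ * (y + x * z) := by positivity
  have t7 : 0 < 2 * A * B * α * β * γ ^ 2 * (z + x * y) := by positivity
  linarith [sq_nonneg (s₁ * β * γ), sq_nonneg (s₂ * α * γ), sq_nonneg (s₃ * α * β), t4, t5, t6, t7]

lemma lt_sqrt_of_gram {c₁ c₂ c₃ : ℝ}
    (hG : 0 < 1 + 2 * c₁ * c₂ * c₃ - c₁ ^ 2 - c₂ ^ 2 - c₃ ^ 2) :
    c₃ < c₁ * c₂ + Real.sqrt ((c₁ ^ 2 - 1) * (c₂ ^ 2 - 1)) := by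
  have hP : 0 ≤ (c₁ ^ 2 - 1) * (c₂ ^ 2 - 1) := by nlinarith [sq_nonneg (c₃ - c₁ * c₂)]
  have hS2 := Real.sq_sqrt hP
  have hS0 := Real.sqrt_nonneg ((c₁ ^ 2 - 1) * (c₂ ^ 2 - 1))
  nlinarith [hS2, hS0, sq_nonneg (Real.sqrt ((c₁ ^ 2 - 1) * (c₂ ^ 2 - 1)) + (c₃ - c₁ * c₂))]

/-- Cosine bound coming from the angle sum condition. -/
lemma cos_bound {θ₁ θ₂ θ₃ : ℝ} (h10 : 0 ≤ θ₁) (h20 : 0 ≤ θ₂) (h30 : 0 ≤ θ₃)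
    (hsum : θ₁ + θ₂ + θ₃ < Real.pi) :
    Real.sin θ₁ * Real.sin θ₂ - Real.cos θ₁ * Real.cos θ₂ < Real.cos θ₃ := by
  have h3lt : θ₃ < Real.pi - (θ₁ + θ₂) := by linarith
  have := Real.cos_lt_cos_of_nonneg_of_le_pi h30
    (by linarith : Real.pi - (θ₁ + θ₂) ≤ Real.pi) h3lt
  rw [Real.cos_pi_sub, Real.cos_add] at this
  linarith

lemma tri {a b c θ₁ θ₂ θ₃ : ℝ} (ha : 0 < a) (hb : 0 < b) (hc : 0 < c)
    (h10 : 0 ≤ θ₁) (h1π : θ₁ < Real.pi)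
    (h20 : 0 ≤ θ₂) (h2π : θ₂ < Real.pi)
    (h30 : 0 ≤ θ₃) (h3π : θ₃ < Real.pi)
    (hsum : θ₁ + θ₂ + θ₃ < Real.pi) :
    arcosh (Real.cosh a * Real.cosh b + Real.cos θ₃ * Real.sinh a * Real.sinh b) <
      arcosh (Real.cosh b * Real.cosh c + Real.cos θ₁ * Real.sinh b * Real.sinh c) +
      arcosh (Real.cosh c * Real.cosh a + Real.cos θ₂ * Real.sinh c * Real.sinh a) := by
  have h1 : 1 < Real.cosh b * Real.cosh c + Real.cos θ₁ * Real.sinh b * Real.sinh c :=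
    one_lt_c hb hc h10 h1π
  have h2 : 1 < Real.cosh c * Real.cosh a + Real.cos θ₂ * Real.sinh c * Real.sinh a :=
    one_lt_c hc ha h20 h2π
  have h3 : 1 < Real.cosh a * Real.cosh b + Real.cos θ₃ * Real.sinh a * Real.sinh b :=
    one_lt_c ha hb h30 h3π
  have hG := gram_pos (Real.cosh a) (Real.cosh b) (Real.cosh c)
    (Real.sinh a) (Real.sinh b) (Real.sinh c)
    (Real.cos θ₁) (Real.cos θ₂) (Real.cos θ₃)
    (Real.sin θ₁) (Real.sin θ₂) (Real.sin θ₃)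
    (Real.cosh_sq_sub_sinh_sq a) (Real.cosh_sq_sub_sinh_sq b) (Real.cosh_sq_sub_sinh_sq c)
    (Real.sin_sq_add_cos_sq θ₁) (Real.sin_sq_add_cos_sq θ₂) (Real.sin_sq_add_cos_sq θ₃)
    (Real.cosh_pos a) (Real.cosh_pos b) (Real.cosh_pos c)
    (Real.sinh_pos_iff.mpr ha) (Real.sinh_pos_iff.mpr hb) (Real.sinh_pos_iff.mpr hc)
    (Real.sin_nonneg_of_nonneg_of_le_pi h10 h1π.le)
    (Real.sin_nonneg_of_nonneg_of_le_pi h20 h2π.le)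
    (Real.sin_nonneg_of_nonneg_of_le_pi h30 h3π.le)
    (cos_bound h20 h30 h10 (by linarith)) (cos_bound h10 h30 h20 (by linarith))
    (cos_bound h10 h20 h30 hsum)
  set c₁ := Real.cosh b * Real.cosh c + Real.cos θ₁ * Real.sinh b * Real.sinh c with hc₁
  set c₂ := Real.cosh c * Real.cosh a + Real.cos θ₂ * Real.sinh c * Real.sinh a with hc₂
  set c₃ := Real.cosh a * Real.cosh b + Real.cos θ₃ * Real.sinh a * Real.sinh b with hc₃
  have hG' : 0 < 1 + 2 * c₁ * c₂ * c₃ - c₁ ^ 2 - c₂ ^ 2 - c₃ ^ 2 := by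
    rw [hc₁, hc₂, hc₃]
    calc (0:ℝ) < _ := hG
    _ = _ := by ring
  have hkey : c₃ < Real.cosh (arcosh c₁ + arcosh c₂) := by
    rw [Real.cosh_add, cosh_arcosh h1.le, cosh_arcosh h2.le, sinh_arcosh h1.le,
      sinh_arcosh h2.le, ← Real.sqrt_mul (by nlinarith : (0:ℝ) ≤ c₁ ^ 2 - 1)]
    exact lt_sqrt_of_gram hG'
  have hd1 : 0 < arcosh c₁ := arcosh_pos h1
  have hd2 : 0 < arcosh c₂ := arcosh_pos h2
  calc arcosh c₃ < arcosh (Real.cosh (arcosh c₁ + arcosh c₂)) := arcosh_lt_arcosh h3.le hkey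
    _ = arcosh c₁ + arcosh c₂ := arcosh_cosh (by linarith)

theorem three_circle_configuration_exists
    (Θ r : Fin 3 → ℝ)
    (hr : ∀ τ, 0 < r τ)
    (hΘ : ∀ τ, Θ τ ∈ Set.Ico 0 Real.pi)
    (hsum : Θ 0 + Θ 1 + Θ 2 < Real.pi) :
    (∀ k : Fin 3, 0 < dist3 Θ r k) ∧
    (∀ k : Fin 3, dist3 Θ r k < dist3 Θ r (k + 1) + dist3 Θ r (k + 2)) := by
  refine ⟨fun k => arcosh_pos (one_lt_c (hr _) (hr _) (hΘ k).1 (hΘ k).2), fun k => ?_⟩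
  have i1 : k + 1 + 1 = k + 2 := by
    rw [add_assoc, show (1 : Fin 3) + 1 = 2 by decide]
  have i2 : k + 1 + 2 = k := by
    rw [add_assoc, show (1 : Fin 3) + 2 = 0 by decide, add_zero]
  have i3 : k + 2 + 1 = k := by
    rw [add_assoc, show (2 : Fin 3) + 1 = 0 by decide, add_zero]
  have i4 : k + 2 + 2 = k + 1 := by
    rw [add_assoc, show (2 : Fin 3) + 2 = 1 by decide]
  have hs : Θ (k + 1) + Θ (k + 2) + Θ k < Real.pi := by
    fin_cases k
    · show Θ 1 + Θ 2 + Θ 0 < Real.pi; linarith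
    · show Θ 2 + Θ 0 + Θ 1 < Real.pi; linarith
    · show Θ 0 + Θ 1 + Θ 2 < Real.pi; linarith
  simp only [dist3, i1, i2, i3, i4]
  exact tri (hr (k + 1)) (hr (k + 2)) (hr k)
    (hΘ (k + 1)).1 (hΘ (k + 1)).2 (hΘ (k + 2)).1 (hΘ (k + 2)).2 (hΘ k).1 (hΘ k).2 hs
end

section
/- Fix Θ₁, Θ₂, Θ₃ ∈ [0, π) with Θ₁ + Θ₂ + Θ₃ < π and fix rⱼ, rₖ > 0 for {j,k} = {1,2,3} \ {i}. Then ϑᵢ(r₁, r₂, r₃) → 0 as rᵢ → ∞. -/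
/-- The inner angle `ϑᵢ` at the `i`-th vertex of the hyperbolic triangle of centers of a
three-circle configuration, by the hyperbolic law of cosines. -/
noncomputable def theta3 (Θ r : Fin 3 → ℝ) (i : Fin 3) : ℝ :=
  Real.arccos ((Real.cosh (dist3 Θ r (i + 1)) * Real.cosh (dist3 Θ r (i + 2)) -
      Real.cosh (dist3 Θ r i)) /
    (Real.sinh (dist3 Θ r (i + 1)) * Real.sinh (dist3 Θ r (i + 2))))

open Filter Topology
open Real hiding arcosh

/-!
As `rᵢ → ∞` the two sides `dⱼ, dₖ` of the triangle of centers that meet at vertex `i` grow without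
bound while the opposite side `dᵢ` does not depend on `rᵢ`, so
`cos ϑᵢ = coth dⱼ coth dₖ - cosh dᵢ / (sinh dⱼ sinh dₖ) → 1`. The sides grow because for `|c| ≤ 1`
the cosine-law expression `cosh x cosh y + c sinh x sinh y` is at least `cosh (|x| - |y|)`.
-/

lemma tendsto_arcosh_atTop : Tendsto arcosh atTop atTop :=
  tendsto_log_atTop.comp <| tendsto_atTop_mono (fun _ => le_add_of_nonneg_right (sqrt_nonneg _))
    tendsto_id

lemma tendsto_sinh_atTop : Tendsto sinh atTop atTop :=
  tendsto_atTop_mono' atTop (eventually_ge_atTop 0 |>.mono fun _ => self_le_sinh_iff.2) tendsto_id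

lemma tendsto_cosh_atTop : Tendsto cosh atTop atTop :=
  tendsto_atTop_mono (fun x => (sinh_lt_cosh x).le) tendsto_sinh_atTop

lemma tendsto_cosh_div_sinh_atTop : Tendsto (fun x => cosh x / sinh x) atTop (𝓝 1) := by
  have h : Tendsto (fun x => 1 + exp (-x) / sinh x) atTop (𝓝 (1 + 0)) :=
    tendsto_const_nhds.add <| tendsto_exp_neg_atTop_nhds_zero.div_atTop tendsto_sinh_atTop
  rw [add_zero] at h
  refine h.congr' ?_
  filter_upwards [tendsto_sinh_atTop.eventually_gt_atTop 0] with x hx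
  rw [← cosh_sub_sinh, sub_div, div_self hx.ne']
  ring

noncomputable def coshLaw (c x y : ℝ) : ℝ := cosh x * cosh y + c * sinh x * sinh y

lemma coshLaw_comm (c x y : ℝ) : coshLaw c x y = coshLaw c y x := by
  simp only [coshLaw]; ring

lemma cosh_abs_sub_abs_le_coshLaw {c : ℝ} (hc : |c| ≤ 1) (x y : ℝ) :
    cosh (|x| - |y|) ≤ coshLaw c x y := by
  rw [cosh_sub, cosh_abs, cosh_abs, ← abs_sinh, ← abs_sinh, ← abs_mul, coshLaw, mul_assoc]
  have : |c * (sinh x * sinh y)| ≤ |sinh x * sinh y| := by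
    rw [abs_mul]; exact mul_le_of_le_one_left (abs_nonneg _) hc
  linarith [neg_abs_le (c * (sinh x * sinh y))]

lemma tendsto_coshLaw_atTop {c : ℝ} (hc : |c| ≤ 1) (y : ℝ) :
    Tendsto (fun x => coshLaw c x y) atTop atTop :=
  tendsto_atTop_mono (cosh_abs_sub_abs_le_coshLaw hc · y) <| tendsto_cosh_atTop.comp <|
    tendsto_atTop_add_const_right _ _ tendsto_abs_atTop_atTop

lemma tendsto_cosh_mul_cosh_sub_div_sinh_mul_sinh {α : Type*} {l : Filter α} {x y : α → ℝ}
    (hx : Tendsto x l atTop) (hy : Tendsto y l atTop) (D : ℝ) :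
    Tendsto (fun s => (cosh (x s) * cosh (y s) - D) / (sinh (x s) * sinh (y s))) l (𝓝 1) := by
  have h : Tendsto (fun s => cosh (x s) / sinh (x s) * (cosh (y s) / sinh (y s)) -
      D / (sinh (x s) * sinh (y s))) l (𝓝 (1 * 1 - 0)) :=
    ((tendsto_cosh_div_sinh_atTop.comp hx).mul (tendsto_cosh_div_sinh_atTop.comp hy)).sub <|
      tendsto_const_nhds.div_atTop <|
        (tendsto_sinh_atTop.comp hx).atTop_mul_atTop₀ (tendsto_sinh_atTop.comp hy)
  rw [mul_one, sub_zero] at h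
  refine h.congr fun s => ?_
  rw [sub_div, mul_div_mul_comm]

lemma fin_three_add_one_ne_self (j : Fin 3) : j + 1 ≠ j := by
  revert j; decide

lemma fin_three_add_two_ne_self (j : Fin 3) : j + 2 ≠ j := by
  revert j; decide

lemma dist3_eq_arcosh_coshLaw (Θ r : Fin 3 → ℝ) (k : Fin 3) :
    dist3 Θ r k = arcosh (coshLaw (cos (Θ k)) (r (k + 1)) (r (k + 2))) :=
  rfl

lemma dist3_update_self (Θ r : Fin 3 → ℝ) (i : Fin 3) (t : ℝ) :
    dist3 Θ (Function.update r i t) i = dist3 Θ r i := by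
  rw [dist3_eq_arcosh_coshLaw, Function.update_of_ne (fin_three_add_one_ne_self i),
    Function.update_of_ne (fin_three_add_two_ne_self i), dist3_eq_arcosh_coshLaw]

lemma tendsto_dist3_update_atTop (Θ r : Fin 3 → ℝ) {i k : Fin 3} (hk : k ≠ i) :
    Tendsto (fun t => dist3 Θ (Function.update r i t) k) atTop atTop := by
  simp only [dist3_eq_arcosh_coshLaw]
  refine tendsto_arcosh_atTop.comp ?_
  rcases (by decide : ∀ i k : Fin 3, k ≠ i → i = k + 1 ∨ i = k + 2) i k hk with rfl | rfl
  · simp only [Function.update_self,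
      Function.update_of_ne ((by decide : ∀ j : Fin 3, j + 2 ≠ j + 1) k)]
    exact tendsto_coshLaw_atTop (abs_cos_le_one _) _
  · simp only [Function.update_self,
      Function.update_of_ne ((by decide : ∀ j : Fin 3, j + 1 ≠ j + 2) k), coshLaw_comm _ (r _)]
    exact tendsto_coshLaw_atTop (abs_cos_le_one _) _

open Filter Topology in
theorem three_circle_angle_tendsto_zero_general
    (Θ : Fin 3 → ℝ)
    (i : Fin 3) (r : Fin 3 → ℝ) :
    Tendsto (fun t => theta3 Θ (Function.update r i t) i) atTop (𝓝 0) := by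
  have hcos := tendsto_cosh_mul_cosh_sub_div_sinh_mul_sinh
    (tendsto_dist3_update_atTop Θ r (fin_three_add_one_ne_self i))
    (tendsto_dist3_update_atTop Θ r (fin_three_add_two_ne_self i)) (cosh (dist3 Θ r i))
  simpa only [theta3, dist3_update_self, Function.comp_def, arccos_one] using
    (continuous_arccos.tendsto 1).comp hcos

open Filter Topology in
theorem three_circle_angle_tendsto_zero
    (Θ : Fin 3 → ℝ)
    (hΘ : ∀ τ, Θ τ ∈ Set.Ico 0 Real.pi)
    (hsum : Θ 0 + Θ 1 + Θ 2 < Real.pi)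
    (i : Fin 3) (r : Fin 3 → ℝ) (hr : ∀ τ, τ ≠ i → 0 < r τ) :
    Tendsto (fun t => theta3 Θ (Function.update r i t) i) atTop (𝓝 0) :=
  three_circle_angle_tendsto_zero_general Θ i r
end

section
/- Fix Θ₁, Θ₂, Θ₃ ∈ [0, π) with Θ₁ + Θ₂ + Θ₃ < π, fix distinct i, j ∈ {1,2,3} with {k} = {1,2,3} \ {i,j}, and fix a positive number c. Then ϑᵢ(r₁, r₂, r₃) + ϑⱼ(r₁, r₂, r₃) → π as (rᵢ, rⱼ, rₖ) → (0, 0, c) with all coordinates staying positive. -/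
/-!
Write `a, b, δ` for the center distances `dᵢ, dⱼ, dₖ`. The hyperbolic law of cosines gives
`cos ϑᵢ + cos ϑⱼ = sinh (a + b) / (sinh a * sinh b) * ((cosh δ - cosh (a - b)) / sinh δ)`.
As `(rᵢ, rⱼ, rₖ) → (0, 0, c)` the first factor tends to `sinh 2c / sinh² c`. With `s = rᵢ + rⱼ`,
both `δ` and `|a - b|` are at most `s`, while `cosh δ - 1 ≥ (1 + cos Θₖ) / 2 * (cosh s - 1)`;
so the numerator of the second factor is `O(cosh δ - 1) = O(sinh² δ)` and the second factor
tends to `0`. Uniform continuity of `arccos` turns `cos ϑᵢ + cos ϑⱼ → 0` into `ϑᵢ + ϑⱼ → π`.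
-/

open Filter Topology Uniformity Set Real

lemma uniformContinuous_arccos : UniformContinuous arccos := by
  have : CompactSpace (Icc (-1 : ℝ) 1) := isCompact_iff_compactSpace.mp isCompact_Icc
  have hres : UniformContinuous ((Icc (-1 : ℝ) 1).domRestrict arccos) :=
    CompactSpace.uniformContinuous_of_continuous (continuous_arccos.comp continuous_subtype_val)
  have heq : arccos = (Icc (-1 : ℝ) 1).domRestrict arccos ∘ projIcc (-1) 1 (by norm_num) := by
    ext x
    simp [arccos, arcsin_projIcc]
  rw [heq]
  exact hres.comp (LipschitzWith.projIcc _).uniformContinuous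

/-- Although neither `f` nor `g` need converge, `arccos (-f) - arccos g → 0` by uniform
continuity, and `arccos (-f) = π - arccos f`. -/
lemma tendsto_arccos_add_arccos {α : Type*} {l : Filter α} {f g : α → ℝ}
    (h : Tendsto (fun x => f x + g x) l (𝓝 0)) :
    Tendsto (fun x => arccos (f x) + arccos (g x)) l (𝓝 π) := by
  have hfg : Tendsto (fun x => (-f x, g x)) l (𝓤 ℝ) := by
    have hdist_eq (x : α) : dist (-f x) (g x) = |f x + g x| := by
      rw [Real.dist_eq, ← abs_neg, neg_sub, sub_neg_eq_add, add_comm]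
    simpa [tendsto_uniformity_iff_dist_tendsto_zero, hdist_eq] using h.abs
  have hdist :=
    tendsto_uniformity_iff_dist_tendsto_zero.1 (Tendsto.comp uniformContinuous_arccos hfg)
  have hsub : Tendsto (fun x => arccos (-f x) - arccos (g x)) l (𝓝 0) := by
    rw [tendsto_zero_iff_abs_tendsto_zero]
    simpa [Function.comp_def, Real.dist_eq] using hdist
  have hlim := (tendsto_const_nhds (x := π)).sub hsub
  rw [sub_zero] at hlim
  refine hlim.congr fun x => ?_
  rw [arccos_neg]
  ring

/-- The cosine of the angle opposite the side `a` in a hyperbolic triangle with sides `a, b, c`. -/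
noncomputable def hypTriangleCos (a b c : ℝ) : ℝ :=
  (cosh b * cosh c - cosh a) / (sinh b * sinh c)

lemma hypTriangleCos_add_hypTriangleCos {a b c : ℝ} (ha : a ≠ 0) (hb : b ≠ 0) :
    hypTriangleCos a b c + hypTriangleCos b a c =
      sinh (a + b) / (sinh a * sinh b) * ((cosh c - cosh (a - b)) / sinh c) := by
  have hsa : sinh a ≠ 0 := sinh_ne_zero.2 ha
  have hsb : sinh b ≠ 0 := sinh_ne_zero.2 hb
  rcases eq_or_ne (sinh c) 0 with hsc | hsc
  · simp [hypTriangleCos, hsc]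
  rw [hypTriangleCos, hypTriangleCos, sinh_add, cosh_sub]
  field_simp
  linear_combination (sinh a * cosh a) * cosh_sq b + (sinh b * cosh b) * cosh_sq a

lemma cosh_sub_one_le_sinh_sq (x : ℝ) : cosh x - 1 ≤ sinh x ^ 2 := by
  nlinarith [cosh_sq x, one_le_cosh x]

lemma tendsto_hypTriangleCos_add_hypTriangleCos {α : Type*} {l : Filter α} {a b c : α → ℝ}
    {a₀ K : ℝ} (ha₀ : a₀ ≠ 0) (hK : 0 ≤ K) (ha : Tendsto a l (𝓝 a₀)) (hb : Tendsto b l (𝓝 a₀))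
    (hc : Tendsto c l (𝓝 0))
    (hbound : ∀ᶠ x in l, |cosh (c x) - cosh (a x - b x)| ≤ K * (cosh (c x) - 1)) :
    Tendsto (fun x => hypTriangleCos (a x) (b x) (c x) + hypTriangleCos (b x) (a x) (c x)) l
      (𝓝 0) := by
  have hsinh {f : α → ℝ} {y : ℝ} (hf : Tendsto f l (𝓝 y)) :
      Tendsto (fun x => sinh (f x)) l (𝓝 (sinh y)) :=
    (continuous_sinh.tendsto y).comp hf
  have hfactor : Tendsto (fun x => sinh (a x + b x) / (sinh (a x) * sinh (b x))) l
      (𝓝 (sinh (a₀ + a₀) / (sinh a₀ * sinh a₀))) :=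
    (hsinh (ha.add hb)).div ((hsinh ha).mul (hsinh hb))
      (mul_ne_zero (sinh_ne_zero.2 ha₀) (sinh_ne_zero.2 ha₀))
  have hdefect : Tendsto (fun x => (cosh (c x) - cosh (a x - b x)) / sinh (c x)) l (𝓝 0) := by
    refine squeeze_zero_norm' (hbound.mono fun x hx => ?_)
      (by simpa using ((hsinh hc).abs.const_mul K))
    rw [norm_div, Real.norm_eq_abs, Real.norm_eq_abs]
    rcases eq_or_ne (sinh (c x)) 0 with h0 | h0
    · simp [h0]
    rw [div_le_iff₀ (abs_pos.2 h0)]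
    calc |cosh (c x) - cosh (a x - b x)| ≤ K * (cosh (c x) - 1) := hx
      _ ≤ K * sinh (c x) ^ 2 := mul_le_mul_of_nonneg_left (cosh_sub_one_le_sinh_sq _) hK
      _ = K * |sinh (c x)| * |sinh (c x)| := by rw [mul_assoc, abs_mul_abs_self, sq]
  have hne : ∀ᶠ x in l, a x ≠ 0 ∧ b x ≠ 0 := (ha.eventually_ne ha₀).and (hb.eventually_ne ha₀)
  have hprod := hfactor.mul hdefect
  rw [mul_zero] at hprod
  refine hprod.congr' ?_
  filter_upwards [hne] with x hx
  rw [hypTriangleCos_add_hypTriangleCos hx.1 hx.2]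

/-- The third side of a hyperbolic triangle with sides `x, y` enclosing an angle of cosine `-t`. -/
noncomputable def hypThirdSide (x y t : ℝ) : ℝ :=
  Real.arcosh (cosh x * cosh y + t * sinh x * sinh y)

lemma hypThirdSide_comm (x y t : ℝ) : hypThirdSide x y t = hypThirdSide y x t := by
  rw [hypThirdSide, hypThirdSide]
  ring_nf

section HyperbolicCosineLaw

variable {x y t : ℝ}

lemma cosh_sub_le_cosh_mul_cosh_add (hx : 0 ≤ x) (hy : 0 ≤ y) (ht : -1 ≤ t) :
    cosh (x - y) ≤ cosh x * cosh y + t * sinh x * sinh y := by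
  have hs : 0 ≤ sinh x * sinh y := mul_nonneg (sinh_nonneg_iff.2 hx) (sinh_nonneg_iff.2 hy)
  nlinarith [cosh_sub x y]

lemma cosh_mul_cosh_add_le_cosh_add (hx : 0 ≤ x) (hy : 0 ≤ y) (ht : t ≤ 1) :
    cosh x * cosh y + t * sinh x * sinh y ≤ cosh (x + y) := by
  have hs : 0 ≤ sinh x * sinh y := mul_nonneg (sinh_nonneg_iff.2 hx) (sinh_nonneg_iff.2 hy)
  nlinarith [cosh_add x y]

/-- The argument is the convex combination `(1 + t)/2 * cosh (x + y) + (1 - t)/2 * cosh (x - y)`. -/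
lemma mul_cosh_add_sub_one_le (ht : t ≤ 1) :
    (1 + t) / 2 * (cosh (x + y) - 1) ≤ cosh x * cosh y + t * sinh x * sinh y - 1 := by
  nlinarith [cosh_add x y, cosh_sub x y,
    mul_nonneg (sub_nonneg.2 ht) (sub_nonneg.2 (one_le_cosh (x - y)))]

lemma cosh_hypThirdSide (hx : 0 ≤ x) (hy : 0 ≤ y) (ht : -1 ≤ t) :
    cosh (hypThirdSide x y t) = cosh x * cosh y + t * sinh x * sinh y :=
  Real.cosh_arcosh ((one_le_cosh _).trans (cosh_sub_le_cosh_mul_cosh_add hx hy ht))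

lemma abs_sub_le_hypThirdSide (hx : 0 ≤ x) (hy : 0 ≤ y) (ht : -1 ≤ t) :
    |x - y| ≤ hypThirdSide x y t := by
  have h := cosh_sub_le_cosh_mul_cosh_add hx hy ht
  rw [← Real.arcosh_cosh (abs_nonneg (x - y)), cosh_abs, hypThirdSide,
    Real.arcosh_le_arcosh (cosh_pos _) ((cosh_pos _).trans_le h)]
  exact h

lemma hypThirdSide_le_add (hx : 0 ≤ x) (hy : 0 ≤ y) (ht : t ∈ Icc (-1) 1) :
    hypThirdSide x y t ≤ x + y := by
  have h := cosh_sub_le_cosh_mul_cosh_add hx hy ht.1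
  rw [← Real.arcosh_cosh (add_nonneg hx hy), hypThirdSide,
    Real.arcosh_le_arcosh ((cosh_pos _).trans_le h) (cosh_pos _)]
  exact cosh_mul_cosh_add_le_cosh_add hx hy ht.2

lemma tendsto_hypThirdSide_of_tendsto_zero {α : Type*} {l : Filter α} {f g : α → ℝ} {c : ℝ}
    (hc : 0 ≤ c) (hf : Tendsto f l (𝓝 0)) (hg : Tendsto g l (𝓝 c)) (ht : t ∈ Icc (-1) 1)
    (hnonneg : ∀ᶠ p in l, 0 ≤ f p ∧ 0 ≤ g p) :
    Tendsto (fun p => hypThirdSide (f p) (g p) t) l (𝓝 c) := by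
  have hlower : Tendsto (fun p => |f p - g p|) l (𝓝 c) := by
    simpa [abs_of_nonneg hc] using (hf.sub hg).abs
  have hupper : Tendsto (fun p => f p + g p) l (𝓝 c) := by simpa using hf.add hg
  exact tendsto_of_tendsto_of_tendsto_of_le_of_le' hlower hupper
    (hnonneg.mono fun p hp => abs_sub_le_hypThirdSide hp.1 hp.2 ht.1)
    (hnonneg.mono fun p hp => hypThirdSide_le_add hp.1 hp.2 ht)

variable {z t₁ t₂ : ℝ}

/-- The hyperbolic triangle inequality `|d(P, R) - d(Q, R)| ≤ d(P, O) + d(O, Q)`, for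
points `P, Q, R` at distances `y, x, z` from a point `O`. -/
lemma abs_hypThirdSide_sub_hypThirdSide_le (hx : 0 ≤ x) (hy : 0 ≤ y) (hz : 0 ≤ z)
    (ht₁ : t₁ ∈ Icc (-1) 1) (ht₂ : t₂ ∈ Icc (-1) 1) :
    |hypThirdSide y z t₁ - hypThirdSide x z t₂| ≤ x + y := by
  have h₁ := abs_sub_le_hypThirdSide hy hz ht₁.1
  have h₂ := abs_sub_le_hypThirdSide hx hz ht₂.1
  have h₁' := hypThirdSide_le_add hy hz ht₁
  have h₂' := hypThirdSide_le_add hx hz ht₂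
  rw [abs_sub_le_iff]
  constructor <;> linarith [le_abs_self (x - z), neg_abs_le (x - z), le_abs_self (y - z),
    neg_abs_le (y - z)]

lemma abs_cosh_hypThirdSide_sub_cosh_le (hx : 0 ≤ x) (hy : 0 ≤ y) (hz : 0 ≤ z)
    (ht : t ∈ Ioc (-1) 1) (ht₁ : t₁ ∈ Icc (-1) 1) (ht₂ : t₂ ∈ Icc (-1) 1) :
    |cosh (hypThirdSide x y t) - cosh (hypThirdSide y z t₁ - hypThirdSide x z t₂)| ≤
      2 / (1 + t) * (cosh (hypThirdSide x y t) - 1) := by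
  set δ := hypThirdSide x y t
  have hδ : 0 ≤ δ := (abs_nonneg _).trans (abs_sub_le_hypThirdSide hx hy ht.1.le)
  have hδle : cosh δ ≤ cosh (x + y) := by
    rw [cosh_le_cosh, abs_of_nonneg hδ, abs_of_nonneg (add_nonneg hx hy)]
    exact hypThirdSide_le_add hx hy (Ioc_subset_Icc_self ht)
  have hdiff : cosh (hypThirdSide y z t₁ - hypThirdSide x z t₂) ≤ cosh (x + y) := by
    rw [cosh_le_cosh, abs_of_nonneg (add_nonneg hx hy)]
    exact abs_hypThirdSide_sub_hypThirdSide_le hx hy hz ht₁ ht₂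
  have hlower : (1 + t) / 2 * (cosh (x + y) - 1) ≤ cosh δ - 1 := by
    rw [cosh_hypThirdSide hx hy ht.1.le]
    exact mul_cosh_add_sub_one_le ht.2
  have h1t : 0 < 1 + t := by linarith [ht.1]
  calc _ ≤ cosh (x + y) - 1 := by
        rw [abs_sub_le_iff]
        constructor <;>
          linarith [one_le_cosh δ, one_le_cosh (hypThirdSide y z t₁ - hypThirdSide x z t₂)]
    _ ≤ _ := by
        rw [div_mul_eq_mul_div, le_div_iff₀ h1t]
        linarith

end HyperbolicCosineLaw

lemma fin_three_eq_add_one_add_two_or {a b m : Fin 3} (hab : a ≠ b) (ham : a ≠ m)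
    (hbm : b ≠ m) : (a = m + 1 ∧ b = m + 2) ∨ (a = m + 2 ∧ b = m + 1) := by
  revert a b m
  decide

lemma dist3_eq_hypThirdSide (Θ r : Fin 3 → ℝ) {a b m : Fin 3} (hab : a ≠ b) (ham : a ≠ m)
    (hbm : b ≠ m) : dist3 Θ r m = hypThirdSide (r a) (r b) (cos (Θ m)) := by
  rcases fin_three_eq_add_one_add_two_or hab ham hbm with ⟨rfl, rfl⟩ | ⟨rfl, rfl⟩
  · rfl
  · exact hypThirdSide_comm _ _ _

lemma theta3_eq_arccos_hypTriangleCos (Θ r : Fin 3 → ℝ) {i j k : Fin 3} (hij : i ≠ j)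
    (hik : i ≠ k) (hjk : j ≠ k) :
    theta3 Θ r i = arccos (hypTriangleCos (dist3 Θ r i) (dist3 Θ r j) (dist3 Θ r k)) := by
  rcases fin_three_eq_add_one_add_two_or hjk hij.symm hik.symm with ⟨rfl, rfl⟩ | ⟨rfl, rfl⟩
  · rfl
  · rw [theta3, hypTriangleCos, mul_comm (cosh _), mul_comm (sinh _)]

open Filter Topology in
theorem three_circle_two_angles_tendsto_pi_general
    (Θ : Fin 3 → ℝ)
    (hΘ : ∀ τ, Θ τ ∈ Set.Ico 0 Real.pi)
    (i j k : Fin 3) (hij : i ≠ j) (hik : i ≠ k) (hjk : j ≠ k)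
    (c : ℝ) (hc : 0 < c) :
    Tendsto (fun r : Fin 3 → ℝ => theta3 Θ r i + theta3 Θ r j)
      (𝓝[{r : Fin 3 → ℝ | ∀ τ, 0 < r τ}] (fun τ => if τ = k then c else 0))
      (𝓝 Real.pi) := by
  set l := 𝓝[{r : Fin 3 → ℝ | ∀ τ, 0 < r τ}] (fun τ => if τ = k then c else 0)
  have hr (τ : Fin 3) : Tendsto (fun r : Fin 3 → ℝ => r τ) l (𝓝 (if τ = k then c else 0)) :=
    ((continuous_apply τ).tendsto _).mono_left nhdsWithin_le_nhds
  have hri : Tendsto (fun r : Fin 3 → ℝ => r i) l (𝓝 0) := by simpa [hik] using hr i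
  have hrj : Tendsto (fun r : Fin 3 → ℝ => r j) l (𝓝 0) := by simpa [hjk] using hr j
  have hrk : Tendsto (fun r : Fin 3 → ℝ => r k) l (𝓝 c) := by simpa using hr k
  have hnonneg : ∀ᶠ r in l, ∀ τ, 0 ≤ r τ :=
    eventually_nhdsWithin_of_forall fun r hpos τ => (hpos τ).le
  have hcos (τ : Fin 3) : cos (Θ τ) ∈ Icc (-1) 1 := ⟨neg_one_le_cos _, cos_le_one _⟩
  have hcosk : cos (Θ k) ∈ Ioc (-1) 1 := ⟨by
    simpa using cos_lt_cos_of_nonneg_of_le_pi (hΘ k).1 le_rfl (hΘ k).2, cos_le_one _⟩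
  have hlim := tendsto_hypTriangleCos_add_hypTriangleCos hc.ne'
    (div_pos two_pos (by linarith [hcosk.1])).le
    (tendsto_hypThirdSide_of_tendsto_zero hc.le hrj hrk (hcos i)
      (hnonneg.mono fun r hpos => ⟨hpos j, hpos k⟩))
    (tendsto_hypThirdSide_of_tendsto_zero hc.le hri hrk (hcos j)
      (hnonneg.mono fun r hpos => ⟨hpos i, hpos k⟩))
    (tendsto_hypThirdSide_of_tendsto_zero le_rfl hri hrj (hcos k)
      (hnonneg.mono fun r hpos => ⟨hpos i, hpos j⟩))
    (hnonneg.mono fun r hpos =>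
      abs_cosh_hypThirdSide_sub_cosh_le (hpos i) (hpos j) (hpos k) hcosk (hcos i) (hcos j))
  refine (tendsto_arccos_add_arccos hlim).congr fun r => ?_
  rw [theta3_eq_arccos_hypTriangleCos Θ r hij hik hjk,
    theta3_eq_arccos_hypTriangleCos Θ r hij.symm hjk hik,
    dist3_eq_hypThirdSide Θ r hjk hij.symm hik.symm, dist3_eq_hypThirdSide Θ r hik hij hjk.symm,
    dist3_eq_hypThirdSide Θ r hij hik hjk]

open Filter Topology in
theorem three_circle_two_angles_tendsto_pi
    (Θ : Fin 3 → ℝ)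
    (hΘ : ∀ τ, Θ τ ∈ Set.Ico 0 Real.pi)
    (hsum : Θ 0 + Θ 1 + Θ 2 < Real.pi)
    (i j k : Fin 3) (hij : i ≠ j) (hik : i ≠ k) (hjk : j ≠ k)
    (c : ℝ) (hc : 0 < c) :
    Tendsto (fun r : Fin 3 → ℝ => theta3 Θ r i + theta3 Θ r j)
      (𝓝[{r : Fin 3 → ℝ | ∀ τ, 0 < r τ}] (fun τ => if τ = k then c else 0))
      (𝓝 Real.pi) :=
  three_circle_two_angles_tendsto_pi_general Θ hΘ i j k hij hik hjk c hc
end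

section
/- Fix Θ₁, Θ₂, Θ₃ ∈ [0, π) with Θ₁ + Θ₂ + Θ₃ < π. Then ϑ₁(r₁, r₂, r₃) + ϑ₂(r₁, r₂, r₃) + ϑ₃(r₁, r₂, r₃) → π as (r₁, r₂, r₃) → (0, 0, 0) with all coordinates staying positive. -/
set_option maxHeartbeats 1000000

lemma one_lt_E {t u v : ℝ} (ht : -1 < Real.cos t) (hu : 0 < u) (hv : 0 < v) :
    1 < Real.cosh u * Real.cosh v + Real.cos t * Real.sinh u * Real.sinh v := by
  have h1 := Real.one_le_cosh (u - v)
  rw [Real.cosh_sub] at h1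
  have h2 : 0 < Real.sinh u * Real.sinh v :=
    mul_pos (Real.sinh_pos_iff.2 hu) (Real.sinh_pos_iff.2 hv)
  nlinarith

lemma cos_fact {p q s : ℝ} (hp : 0 ≤ p) (hq0 : 0 ≤ q) (hq : q ≤ Real.pi) (hs0 : 0 ≤ s)
    (hs : s ≤ Real.pi) (hsum : p + q + s < Real.pi) :
    0 < Real.cos p + Real.cos q * Real.cos s := by
  have h1 : Real.cos (Real.pi - (q + s)) < Real.cos p :=
    Real.cos_lt_cos_of_nonneg_of_le_pi hp (by linarith) (by linarith)
  rw [Real.cos_pi_sub, Real.cos_add] at h1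
  have h2 : 0 ≤ Real.sin q * Real.sin s :=
    mul_nonneg (Real.sin_nonneg_of_nonneg_of_le_pi hq0 hq)
      (Real.sin_nonneg_of_nonneg_of_le_pi hs0 hs)
  linarith

lemma Vpos {A B C a b c x y z : ℝ} (hA : A ^ 2 = 1 + a ^ 2) (hB : B ^ 2 = 1 + b ^ 2)
    (hC : C ^ 2 = 1 + c ^ 2) (hA1 : 1 ≤ A) (hB1 : 1 ≤ B) (hC1 : 1 ≤ C)
    (ha : 0 < a) (hb : 0 < b) (hc : 0 < c)
    (hx2 : x ^ 2 ≤ 1) (hy2 : y ^ 2 ≤ 1) (hz2 : z ^ 2 ≤ 1)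
    (h1 : 0 < x + y * z) (h2 : 0 < y + z * x) (h3 : 0 < z + x * y) :
    0 < 1 + 2 * ((B * C + x * b * c) * ((C * A + y * c * a) * (A * B + z * a * b))) -
      (B * C + x * b * c) ^ 2 - (C * A + y * c * a) ^ 2 - (A * B + z * a * b) ^ 2 := by
  have hxu : x ≤ 1 := by nlinarith [sq_nonneg (x - 1)]
  have hxl : -1 ≤ x := by nlinarith [sq_nonneg (x + 1)]
  have hxyz : 0 ≤ 1 + x * y * z := by
    nlinarith [mul_nonneg (by linarith : (0:ℝ) ≤ 1 + x) (sq_nonneg (y + z)),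
      mul_nonneg (by linarith : (0:ℝ) ≤ 1 - x) (sq_nonneg (y - z))]
  have key : 1 + 2 * ((B * C + x * b * c) * ((C * A + y * c * a) * (A * B + z * a * b))) -
      (B * C + x * b * c) ^ 2 - (C * A + y * c * a) ^ 2 - (A * B + z * a * b) ^ 2 =
      b ^ 2 * c ^ 2 * (1 - x ^ 2) + c ^ 2 * a ^ 2 * (1 - y ^ 2) + a ^ 2 * b ^ 2 * (1 - z ^ 2) +
      2 * (a ^ 2 * b ^ 2 * c ^ 2) * (1 + x * y * z) +
      2 * (a * b * c) * (a * (B * C) * (x + y * z) + b * (C * A) * (y + z * x) +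
        c * (A * B) * (z + x * y)) := by
    linear_combination (2 * B ^ 2 * C ^ 2 + 2 * B * C * b * c * x - B ^ 2 - C ^ 2) * hA +
      (2 * C ^ 2 * a ^ 2 + 2 * A * C * a * c * y + C ^ 2 - a ^ 2 - 1) * hB +
      (2 * a ^ 2 * b ^ 2 + 2 * A * B * a * b * z + a ^ 2 + b ^ 2) * hC
  rw [key]
  have t1 : 0 ≤ b ^ 2 * c ^ 2 * (1 - x ^ 2) := mul_nonneg (by positivity) (by linarith)
  have t2 : 0 ≤ c ^ 2 * a ^ 2 * (1 - y ^ 2) := mul_nonneg (by positivity) (by linarith)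
  have t3 : 0 ≤ a ^ 2 * b ^ 2 * (1 - z ^ 2) := mul_nonneg (by positivity) (by linarith)
  have t4 : 0 ≤ 2 * (a ^ 2 * b ^ 2 * c ^ 2) * (1 + x * y * z) := by positivity
  have p1 : 0 < a * (B * C) * (x + y * z) := by
    apply mul_pos (mul_pos ha (mul_pos (by linarith) (by linarith))) h1
  have p2 : 0 < b * (C * A) * (y + z * x) := by
    apply mul_pos (mul_pos hb (mul_pos (by linarith) (by linarith))) h2
  have p3 : 0 < c * (A * B) * (z + x * y) := by
    apply mul_pos (mul_pos hc (mul_pos (by linarith) (by linarith))) h3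
  have t5 : 0 < 2 * (a * b * c) * (a * (B * C) * (x + y * z) + b * (C * A) * (y + z * x) +
      c * (A * B) * (z + x * y)) := by
    apply mul_pos (by positivity); linarith
  linarith

lemma angle_gap {X Y : ℝ} (hX0 : 0 ≤ X) (hXpi : X ≤ Real.pi) (hY0 : 0 ≤ Y)
    (hYpi : Y ≤ Real.pi) (hc : Real.cos Y ≤ Real.cos X) :
    X ≤ Y ∧ Y - X ≤ Real.pi * Real.sqrt ((Real.cos X - Real.cos Y) / 2) := by
  have pi_pos := Real.pi_pos
  have hXY : X ≤ Y := by
    by_contra hlt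
    push_neg at hlt
    exact absurd hc (not_le.2 (Real.cos_lt_cos_of_nonneg_of_le_pi hY0 hXpi hlt))
  refine ⟨hXY, ?_⟩
  set h := (Y - X) / 2 with hh
  have h0 : 0 ≤ h := by rw [hh]; linarith
  have hpi2 : h ≤ Real.pi / 2 := by rw [hh]; linarith
  have hsin : Real.cos X - Real.cos Y = 2 * Real.sin ((X + Y) / 2) * Real.sin h := by
    rw [Real.cos_sub_cos]
    have hxy2 : (X - Y) / 2 = -h := by rw [hh]; ring
    rw [hxy2, Real.sin_neg]; ring
  have hm1 : Real.sin h ≤ Real.sin ((X + Y) / 2) := by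
    rcases le_or_gt ((X + Y) / 2) (Real.pi / 2) with hm | hm
    · exact Real.sin_le_sin_of_le_of_le_pi_div_two (by linarith) hm (by rw [hh]; linarith)
    · have hrw : Real.sin ((X + Y) / 2) = Real.sin (Real.pi - (X + Y) / 2) :=
        (Real.sin_pi_sub _).symm
      rw [hrw]
      exact Real.sin_le_sin_of_le_of_le_pi_div_two (by linarith) (by linarith)
        (by rw [hh]; linarith)
  have hsh0 : 0 ≤ Real.sin h := Real.sin_nonneg_of_nonneg_of_le_pi h0 (by linarith)
  have h2 : Real.sin h ^ 2 ≤ (Real.cos X - Real.cos Y) / 2 := by nlinarith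
  have h3 : Real.sin h ≤ Real.sqrt ((Real.cos X - Real.cos Y) / 2) := by
    calc Real.sin h = Real.sqrt (Real.sin h ^ 2) := (Real.sqrt_sq hsh0).symm
    _ ≤ _ := Real.sqrt_le_sqrt h2
  have h4 : h ≤ Real.pi / 2 * Real.sin h := by
    have h5 := Real.mul_le_sin h0 hpi2
    have h6 := mul_le_mul_of_nonneg_left h5 (le_of_lt (half_pos pi_pos))
    have h7 : Real.pi / 2 * (2 / Real.pi * h) = h := by field_simp
    linarith
  calc Y - X = 2 * h := by rw [hh]; ring
  _ ≤ 2 * (Real.pi / 2 * Real.sin h) := by linarith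
  _ = Real.pi * Real.sin h := by ring
  _ ≤ Real.pi * Real.sqrt ((Real.cos X - Real.cos Y) / 2) :=
      mul_le_mul_of_nonneg_left h3 pi_pos.le


lemma tri_lemma {C0 C1 C2 S1 S2 : ℝ} (h1sq : S1 ^ 2 = C1 ^ 2 - 1) (h2sq : S2 ^ 2 = C2 ^ 2 - 1)
    (hS : 0 < S1 * S2)
    (hV : 0 < 1 + 2 * (C0 * (C1 * C2)) - C0 ^ 2 - C1 ^ 2 - C2 ^ 2) :
    C1 * C2 - C0 < S1 * S2 ∧ -(S1 * S2) < C1 * C2 - C0 := by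
  have hss : (S1 * S2) ^ 2 = (C1 ^ 2 - 1) * (C2 ^ 2 - 1) := by rw [mul_pow, h1sq, h2sq]
  have h : (C1 * C2 - C0) ^ 2 < (S1 * S2) ^ 2 := by nlinarith
  constructor
  · nlinarith
  · nlinarith

lemma cc_pos {C0 C1 C2 S1 S2 : ℝ} (h1sq : S1 ^ 2 = C1 ^ 2 - 1) (h2sq : S2 ^ 2 = C2 ^ 2 - 1)
    (hS1 : 0 < S1) (hS2 : 0 < S2) (hc1 : 1 < C1) (hc2 : 1 < C2)
    (hlt : C1 * C2 - C0 < S1 * S2) :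
    0 < S1 * (C2 * C0 - C1) + S2 * (C0 * C1 - C2) := by
  have hid : (C1 * C2 - S1 * S2) * (S1 * C2 + S2 * C1) = S1 * C1 + S2 * C2 := by
    linear_combination (-(S2 * C2)) * h1sq + (-(S1 * C1)) * h2sq
  have hP : 0 < S1 * C2 + S2 * C1 :=
    add_pos (mul_pos hS1 (by linarith)) (mul_pos hS2 (by linarith))
  have hstep : (C1 * C2 - S1 * S2) * (S1 * C2 + S2 * C1) < C0 * (S1 * C2 + S2 * C1) :=
    mul_lt_mul_of_pos_right (by linarith) hP
  nlinarith [hid, hstep]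

lemma key_bounds (Θ : Fin 3 → ℝ) (hΘ : ∀ τ, Θ τ ∈ Set.Ico 0 Real.pi)
    (hsum : Θ 0 + Θ 1 + Θ 2 < Real.pi) (r : Fin 3 → ℝ) (hr : ∀ τ, 0 < r τ) :
    Real.pi - Real.pi * Real.sqrt ((Real.cosh (r 1) * Real.cosh (r 2) +
        Real.cos (Θ 0) * Real.sinh (r 1) * Real.sinh (r 2) - 1) / 2) ≤
      ∑ τ : Fin 3, theta3 Θ r τ ∧ ∑ τ : Fin 3, theta3 Θ r τ ≤ Real.pi := by
  have pi_pos := Real.pi_pos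
  have hcosneg : ∀ τ, -1 < Real.cos (Θ τ) := fun τ => by
    have h := Real.cos_lt_cos_of_nonneg_of_le_pi (hΘ τ).1 le_rfl (hΘ τ).2
    rwa [Real.cos_pi] at h
  have hE0 : 1 < Real.cosh (r 1) * Real.cosh (r 2) +
      Real.cos (Θ 0) * Real.sinh (r 1) * Real.sinh (r 2) :=
    one_lt_E (hcosneg 0) (hr 1) (hr 2)
  have hE1 : 1 < Real.cosh (r 2) * Real.cosh (r 0) +
      Real.cos (Θ 1) * Real.sinh (r 2) * Real.sinh (r 0) :=
    one_lt_E (hcosneg 1) (hr 2) (hr 0)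
  have hE2 : 1 < Real.cosh (r 0) * Real.cosh (r 1) +
      Real.cos (Θ 2) * Real.sinh (r 0) * Real.sinh (r 1) :=
    one_lt_E (hcosneg 2) (hr 0) (hr 1)
  have hT0 : theta3 Θ r 0 = Real.arccos ((Real.cosh (dist3 Θ r 1) * Real.cosh (dist3 Θ r 2) -
      Real.cosh (dist3 Θ r 0)) / (Real.sinh (dist3 Θ r 1) * Real.sinh (dist3 Θ r 2))) := rfl
  have hT1 : theta3 Θ r 1 = Real.arccos ((Real.cosh (dist3 Θ r 2) * Real.cosh (dist3 Θ r 0) -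
      Real.cosh (dist3 Θ r 1)) / (Real.sinh (dist3 Θ r 2) * Real.sinh (dist3 Θ r 0))) := rfl
  have hT2 : theta3 Θ r 2 = Real.arccos ((Real.cosh (dist3 Θ r 0) * Real.cosh (dist3 Θ r 1) -
      Real.cosh (dist3 Θ r 2)) / (Real.sinh (dist3 Θ r 0) * Real.sinh (dist3 Θ r 1))) := rfl
  have hc0 : Real.cosh (dist3 Θ r 0) = Real.cosh (r 1) * Real.cosh (r 2) +
      Real.cos (Θ 0) * Real.sinh (r 1) * Real.sinh (r 2) := cosh_arcosh hE0.le
  have hc1 : Real.cosh (dist3 Θ r 1) = Real.cosh (r 2) * Real.cosh (r 0) +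
      Real.cos (Θ 1) * Real.sinh (r 2) * Real.sinh (r 0) := cosh_arcosh hE1.le
  have hc2 : Real.cosh (dist3 Θ r 2) = Real.cosh (r 0) * Real.cosh (r 1) +
      Real.cos (Θ 2) * Real.sinh (r 0) * Real.sinh (r 1) := cosh_arcosh hE2.le
  have hs0sq' : Real.sinh (dist3 Θ r 0) ^ 2 = Real.cosh (dist3 Θ r 0) ^ 2 - 1 :=
    Real.sinh_sq _
  have hs1sq' : Real.sinh (dist3 Θ r 1) ^ 2 = Real.cosh (dist3 Θ r 1) ^ 2 - 1 :=
    Real.sinh_sq _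
  have hs2sq' : Real.sinh (dist3 Θ r 2) ^ 2 = Real.cosh (dist3 Θ r 2) ^ 2 - 1 :=
    Real.sinh_sq _
  have hs0pos' : 0 < Real.sinh (dist3 Θ r 0) := Real.sinh_pos_iff.2 (arcosh_pos hE0)
  have hs1pos' : 0 < Real.sinh (dist3 Θ r 1) := Real.sinh_pos_iff.2 (arcosh_pos hE1)
  have hs2pos' : 0 < Real.sinh (dist3 Θ r 2) := Real.sinh_pos_iff.2 (arcosh_pos hE2)
  rw [Fin.sum_univ_three]
  set c0 := Real.cosh (dist3 Θ r 0) with hc0d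
  set c1 := Real.cosh (dist3 Θ r 1) with hc1d
  set c2 := Real.cosh (dist3 Θ r 2) with hc2d
  set s0 := Real.sinh (dist3 Θ r 0) with hs0d
  set s1 := Real.sinh (dist3 Θ r 1) with hs1d
  set s2 := Real.sinh (dist3 Θ r 2) with hs2d
  -- basic facts
  have hc0gt : 1 < c0 := by rw [hc0]; exact hE0
  have hc1gt : 1 < c1 := by rw [hc1]; exact hE1
  have hc2gt : 1 < c2 := by rw [hc2]; exact hE2
  have hs0sq : s0 ^ 2 = c0 ^ 2 - 1 := hs0sq'
  have hs1sq : s1 ^ 2 = c1 ^ 2 - 1 := hs1sq'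
  have hs2sq : s2 ^ 2 = c2 ^ 2 - 1 := hs2sq'
  have hs0pos : 0 < s0 := hs0pos'
  have hs1pos : 0 < s1 := hs1pos'
  have hs2pos : 0 < s2 := hs2pos'
  clear_value c0 c1 c2 s0 s1 s2
  -- V
  set V : ℝ := 1 + 2 * (c0 * (c1 * c2)) - c0 ^ 2 - c1 ^ 2 - c2 ^ 2 with hVdef
  clear_value V
  have hV : 0 < V := by
    rw [hVdef, hc0, hc1, hc2]
    have hfact0 : 0 < Real.cos (Θ 0) + Real.cos (Θ 1) * Real.cos (Θ 2) :=
      cos_fact (hΘ 0).1 (hΘ 1).1 (hΘ 1).2.le (hΘ 2).1 (hΘ 2).2.le (by linarith)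
    have hfact1 : 0 < Real.cos (Θ 1) + Real.cos (Θ 2) * Real.cos (Θ 0) :=
      cos_fact (hΘ 1).1 (hΘ 2).1 (hΘ 2).2.le (hΘ 0).1 (hΘ 0).2.le (by linarith)
    have hfact2 : 0 < Real.cos (Θ 2) + Real.cos (Θ 0) * Real.cos (Θ 1) :=
      cos_fact (hΘ 2).1 (hΘ 0).1 (hΘ 0).2.le (hΘ 1).1 (hΘ 1).2.le (by linarith)
    have h := Vpos (A := Real.cosh (r 0)) (B := Real.cosh (r 1)) (C := Real.cosh (r 2))
      (a := Real.sinh (r 0)) (b := Real.sinh (r 1)) (c := Real.sinh (r 2))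
      (x := Real.cos (Θ 0)) (y := Real.cos (Θ 1)) (z := Real.cos (Θ 2))
      (by rw [Real.cosh_sq]; ring) (by rw [Real.cosh_sq]; ring) (by rw [Real.cosh_sq]; ring)
      (Real.one_le_cosh _) (Real.one_le_cosh _) (Real.one_le_cosh _)
      (Real.sinh_pos_iff.2 (hr 0)) (Real.sinh_pos_iff.2 (hr 1)) (Real.sinh_pos_iff.2 (hr 2))
      (Real.cos_sq_le_one _) (Real.cos_sq_le_one _) (Real.cos_sq_le_one _)
      hfact0 hfact1 hfact2
    exact h
  have hVnn : 0 ≤ V := hV.le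
  have hV' : 0 < 1 + 2 * (c0 * (c1 * c2)) - c0 ^ 2 - c1 ^ 2 - c2 ^ 2 := by
    rw [← hVdef]; exact hV
  -- triangle inequalities
  have hss1 : (s2 * s0) ^ 2 = (c2 ^ 2 - 1) * (c0 ^ 2 - 1) := by rw [mul_pow, hs2sq, hs0sq]
  have hss2 : (s0 * s1) ^ 2 = (c0 ^ 2 - 1) * (c1 ^ 2 - 1) := by rw [mul_pow, hs0sq, hs1sq]
  have hd0pos : 0 < s1 * s2 := mul_pos hs1pos hs2pos
  have hd1pos : 0 < s2 * s0 := mul_pos hs2pos hs0pos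
  have hd2pos : 0 < s0 * s1 := mul_pos hs0pos hs1pos
  obtain ⟨hlt0, hgt0⟩ := tri_lemma hs1sq hs2sq hd0pos hV'
  obtain ⟨hlt1, hgt1⟩ := tri_lemma hs2sq hs0sq hd1pos (by linarith [hV'] : (0:ℝ) <
    1 + 2 * (c1 * (c2 * c0)) - c1 ^ 2 - c2 ^ 2 - c0 ^ 2)
  obtain ⟨hlt2, hgt2⟩ := tri_lemma hs0sq hs1sq hd2pos (by linarith [hV'] : (0:ℝ) <
    1 + 2 * (c2 * (c0 * c1)) - c2 ^ 2 - c0 ^ 2 - c1 ^ 2)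
  -- cos values (product form)
  have hcos0 : Real.cos (theta3 Θ r 0) = (c1 * c2 - c0) / (s1 * s2) := by
    rw [hT0]
    exact Real.cos_arccos (by rw [le_div_iff₀ hd0pos]; linarith) (by rw [div_le_one hd0pos]; linarith)
  have hcos1 : Real.cos (theta3 Θ r 1) = (c2 * c0 - c1) / (s2 * s0) := by
    rw [hT1]
    exact Real.cos_arccos (by rw [le_div_iff₀ hd1pos]; linarith) (by rw [div_le_one hd1pos]; linarith)
  have hcos2 : Real.cos (theta3 Θ r 2) = (c0 * c1 - c2) / (s0 * s1) := by
    rw [hT2]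
    exact Real.cos_arccos (by rw [le_div_iff₀ hd2pos]; linarith) (by rw [div_le_one hd2pos]; linarith)
  have hcosm0 : Real.cos (theta3 Θ r 0) * (s1 * s2) = c1 * c2 - c0 := by
    rw [hcos0, div_mul_cancel₀ _ (ne_of_gt hd0pos)]
  have hcosm1 : Real.cos (theta3 Θ r 1) * (s2 * s0) = c2 * c0 - c1 := by
    rw [hcos1, div_mul_cancel₀ _ (ne_of_gt hd1pos)]
  have hcosm2 : Real.cos (theta3 Θ r 2) * (s0 * s1) = c0 * c1 - c2 := by
    rw [hcos2, div_mul_cancel₀ _ (ne_of_gt hd2pos)]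
  -- sin values
  have hsinm1 : Real.sin (theta3 Θ r 1) * (s2 * s0) = Real.sqrt V := by
    rw [hT1, Real.sin_arccos]
    have hd2ne : ((s2 * s0) ^ 2) ≠ 0 := pow_ne_zero _ (ne_of_gt hd1pos)
    have hfrac : 1 - ((c2 * c0 - c1) / (s2 * s0)) ^ 2 = V / (s2 * s0) ^ 2 := by
      rw [div_pow, one_sub_div hd2ne]
      congr 1
      rw [hss1, hVdef]; ring
    rw [hfrac, div_eq_mul_inv, show ((s2 * s0) ^ 2)⁻¹ = ((s2 * s0)⁻¹) ^ 2 by ring,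
      Real.sqrt_mul hVnn, Real.sqrt_sq (inv_nonneg.mpr hd1pos.le), mul_assoc,
      inv_mul_cancel₀ (ne_of_gt hd1pos), mul_one]
  have hsinm2 : Real.sin (theta3 Θ r 2) * (s0 * s1) = Real.sqrt V := by
    rw [hT2, Real.sin_arccos]
    have hd2ne : ((s0 * s1) ^ 2) ≠ 0 := pow_ne_zero _ (ne_of_gt hd2pos)
    have hfrac : 1 - ((c0 * c1 - c2) / (s0 * s1)) ^ 2 = V / (s0 * s1) ^ 2 := by
      rw [div_pow, one_sub_div hd2ne]
      congr 1
      rw [hss2, hVdef]; ring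
    rw [hfrac, div_eq_mul_inv, show ((s0 * s1) ^ 2)⁻¹ = ((s0 * s1)⁻¹) ^ 2 by ring,
      Real.sqrt_mul hVnn, Real.sqrt_sq (inv_nonneg.mpr hd2pos.le), mul_assoc,
      inv_mul_cancel₀ (ne_of_gt hd2pos), mul_one]
  -- angles in [0, π]
  have hrange : ∀ i : Fin 3, 0 ≤ theta3 Θ r i ∧ theta3 Θ r i ≤ Real.pi := fun i =>
    ⟨Real.arccos_nonneg _, Real.arccos_le_pi _⟩
  have hsin1nn : 0 ≤ Real.sin (theta3 Θ r 1) :=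
    Real.sin_nonneg_of_nonneg_of_le_pi (hrange 1).1 (hrange 1).2
  have hsin2nn : 0 ≤ Real.sin (theta3 Θ r 2) :=
    Real.sin_nonneg_of_nonneg_of_le_pi (hrange 2).1 (hrange 2).2
  -- θ1 + θ2 ≤ π
  have hcc : 0 < Real.cos (theta3 Θ r 1) + Real.cos (theta3 Θ r 2) := by
    rw [hcos1, hcos2]
    have hgoal : (c2 * c0 - c1) / (s2 * s0) + (c0 * c1 - c2) / (s0 * s1) =
        (s1 * (c2 * c0 - c1) + s2 * (c0 * c1 - c2)) / (s0 * (s1 * s2)) := by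
      field_simp
    rw [hgoal]
    exact div_pos (cc_pos hs1sq hs2sq hs1pos hs2pos hc1gt hc2gt hlt0)
      (mul_pos hs0pos hd0pos)
  have h12 : theta3 Θ r 1 + theta3 Θ r 2 ≤ Real.pi := by
    by_contra hcon
    push_neg at hcon
    have h1 : Real.cos (theta3 Θ r 1) < Real.cos (Real.pi - theta3 Θ r 2) :=
      Real.cos_lt_cos_of_nonneg_of_le_pi (by linarith [(hrange 2).2]) (hrange 1).2
        (by linarith)
    rw [Real.cos_pi_sub] at h1
    linarith
  -- the central identity
  have key2 : (c2 * c0 - c1) * (c0 * c1 - c2) - Real.sqrt V * Real.sqrt V +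
      (c1 * c2 - c0) * s0 ^ 2 = (c0 - 1) * (Real.sqrt V * Real.sqrt V) := by
    rw [Real.mul_self_sqrt hVnn, hs0sq, hVdef]; ring
  have heq : Real.cos (theta3 Θ r 1 + theta3 Θ r 2) + Real.cos (theta3 Θ r 0) =
      (c0 - 1) * (Real.sin (theta3 Θ r 1) * Real.sin (theta3 Θ r 2)) := by
    have hden : (s0 ^ 2 * (s1 * s2)) ≠ 0 := by
      apply ne_of_gt; exact mul_pos (pow_pos hs0pos 2) hd0pos
    apply mul_right_cancel₀ hden
    rw [Real.cos_add]
    have hp12 : (Real.cos (theta3 Θ r 1) * (s2 * s0)) * (Real.cos (theta3 Θ r 2) * (s0 * s1)) =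
        (c2 * c0 - c1) * (c0 * c1 - c2) := by rw [hcosm1, hcosm2]
    have hsin12 : (Real.sin (theta3 Θ r 1) * (s2 * s0)) * (Real.sin (theta3 Θ r 2) * (s0 * s1)) =
        Real.sqrt V * Real.sqrt V := by rw [hsinm1, hsinm2]
    linear_combination hp12 - hsin12 + s0 ^ 2 * hcosm0 + key2 - (c0 - 1) * hsin12
  -- assemble
  have hc01 : 0 ≤ c0 - 1 := by linarith
  have hprod01 : 0 ≤ Real.sin (theta3 Θ r 1) * Real.sin (theta3 Θ r 2) :=
    mul_nonneg hsin1nn hsin2nn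
  have hprodle : Real.sin (theta3 Θ r 1) * Real.sin (theta3 Θ r 2) ≤ 1 :=
    mul_le_one₀ (Real.sin_le_one _) hsin2nn (Real.sin_le_one _)
  have hcosY : Real.cos (Real.pi - theta3 Θ r 0) = -Real.cos (theta3 Θ r 0) :=
    Real.cos_pi_sub _
  have hgap := angle_gap (X := theta3 Θ r 1 + theta3 Θ r 2) (Y := Real.pi - theta3 Θ r 0)
    (by linarith [(hrange 1).1, (hrange 2).1]) h12
    (by linarith [(hrange 0).2]) (by linarith [(hrange 0).1])
    (by rw [hcosY]; linarith [heq, mul_nonneg hc01 hprod01])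
  obtain ⟨hXY, hYX⟩ := hgap
  constructor
  · -- lower bound
    have hE : Real.cos (theta3 Θ r 1 + theta3 Θ r 2) - Real.cos (Real.pi - theta3 Θ r 0) =
        (c0 - 1) * (Real.sin (theta3 Θ r 1) * Real.sin (theta3 Θ r 2)) := by
      rw [hcosY]; linarith [heq]
    have hle : (Real.cos (theta3 Θ r 1 + theta3 Θ r 2) - Real.cos (Real.pi - theta3 Θ r 0)) / 2 ≤
        (c0 - 1) / 2 := by
      rw [hE]
      linarith [mul_le_of_le_one_right hc01 hprodle]
    have hsq : Real.sqrt ((Real.cos (theta3 Θ r 1 + theta3 Θ r 2) -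
        Real.cos (Real.pi - theta3 Θ r 0)) / 2) ≤ Real.sqrt ((c0 - 1) / 2) :=
      Real.sqrt_le_sqrt hle
    have hfin : Real.pi - theta3 Θ r 0 - (theta3 Θ r 1 + theta3 Θ r 2) ≤
        Real.pi * Real.sqrt ((c0 - 1) / 2) := by
      calc Real.pi - theta3 Θ r 0 - (theta3 Θ r 1 + theta3 Θ r 2) ≤
          Real.pi * Real.sqrt ((Real.cos (theta3 Θ r 1 + theta3 Θ r 2) -
            Real.cos (Real.pi - theta3 Θ r 0)) / 2) := by linarith [hYX]
      _ ≤ Real.pi * Real.sqrt ((c0 - 1) / 2) := mul_le_mul_of_nonneg_left hsq pi_pos.le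
    rw [hc0] at hfin
    linarith [hfin]
  · -- upper bound
    linarith [hXY]

open Filter Topology in
theorem three_circle_angle_sum_tendsto_pi
    (Θ : Fin 3 → ℝ)
    (hΘ : ∀ τ, Θ τ ∈ Set.Ico 0 Real.pi)
    (hsum : Θ 0 + Θ 1 + Θ 2 < Real.pi) :
    Tendsto (fun r : Fin 3 → ℝ => ∑ τ : Fin 3, theta3 Θ r τ)
      (𝓝[{r : Fin 3 → ℝ | ∀ τ, 0 < r τ}] (fun _ => 0))
      (𝓝 Real.pi) := by
  have hcont : Continuous (fun r : Fin 3 → ℝ => Real.pi - Real.pi *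
      Real.sqrt ((Real.cosh (r 1) * Real.cosh (r 2) +
        Real.cos (Θ 0) * Real.sinh (r 1) * Real.sinh (r 2) - 1) / 2)) := by
    fun_prop
  have h0 : Real.pi - Real.pi * Real.sqrt ((Real.cosh ((fun _ : Fin 3 => (0:ℝ)) 1) *
      Real.cosh ((fun _ : Fin 3 => (0:ℝ)) 2) + Real.cos (Θ 0) *
      Real.sinh ((fun _ : Fin 3 => (0:ℝ)) 1) * Real.sinh ((fun _ : Fin 3 => (0:ℝ)) 2) - 1) / 2) =
      Real.pi := by
    norm_num
  have hg : Tendsto (fun r : Fin 3 → ℝ => Real.pi - Real.pi *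
      Real.sqrt ((Real.cosh (r 1) * Real.cosh (r 2) +
        Real.cos (Θ 0) * Real.sinh (r 1) * Real.sinh (r 2) - 1) / 2))
      (𝓝[{r : Fin 3 → ℝ | ∀ τ, 0 < r τ}] (fun _ => 0)) (𝓝 Real.pi) := by
    have := hcont.tendsto (fun _ => 0)
    rw [h0] at this
    exact this.mono_left nhdsWithin_le_nhds
  refine tendsto_of_tendsto_of_tendsto_of_le_of_le' hg tendsto_const_nhds ?_ ?_
  · filter_upwards [eventually_mem_nhdsWithin] with r hr using (key_bounds Θ hΘ hsum r hr).1
  · filter_upwards [eventually_mem_nhdsWithin] with r hr using (key_bounds Θ hΘ hsum r hr).2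
end

section
/- Fix Θ ∈ (0, π) and a positive number a. Then ϑ₁(r₁, r₂) → Θ as (r₁, r₂) → (0, a) with both coordinates staying positive. -/
/-- The hyperbolic distance between the centers of two hyperbolic disks of radii `r₁`, `r₂`
meeting at exterior intersection angle `Θ` (hyperbolic cosine law). -/
noncomputable def dist2 (Θ r₁ r₂ : ℝ) : ℝ :=
  arcosh (Real.cosh r₁ * Real.cosh r₂ + Real.cos Θ * Real.sinh r₁ * Real.sinh r₂)

/-- The inner angle `ϑ₁` at the first center of the hyperbolic triangle with side
lengths `r₁`, `r₂`, `d` (hyperbolic law of cosines). -/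
noncomputable def theta2₁ (Θ r₁ r₂ : ℝ) : ℝ :=
  Real.arccos ((Real.cosh r₁ * Real.cosh (dist2 Θ r₁ r₂) - Real.cosh r₂) /
    (Real.sinh r₁ * Real.sinh (dist2 Θ r₁ r₂)))

/-- The inner angle `ϑ₂` at the second center of the hyperbolic triangle with side
lengths `r₁`, `r₂`, `d` (hyperbolic law of cosines). -/
noncomputable def theta2₂ (Θ r₁ r₂ : ℝ) : ℝ :=
  Real.arccos ((Real.cosh r₂ * Real.cosh (dist2 Θ r₁ r₂) - Real.cosh r₁) /
    (Real.sinh r₂ * Real.sinh (dist2 Θ r₁ r₂)))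

lemma aux_sq_nonneg {x : ℝ} (hx : 1 ≤ x) : 0 ≤ x ^ 2 - 1 := by nlinarith

open Filter Topology in
theorem two_circle_angle_tendsto_Theta
    (Θ : ℝ) (hΘ : Θ ∈ Set.Ioo 0 Real.pi) (a : ℝ) (ha : 0 < a) :
    Tendsto (fun p : ℝ × ℝ => theta2₁ Θ p.1 p.2)
      (𝓝[{p : ℝ × ℝ | 0 < p.1 ∧ 0 < p.2}] (0, a)) (𝓝 Θ) := by
  set c := Real.cos Θ with hc
  set C : ℝ × ℝ → ℝ := fun p =>
    Real.cosh p.1 * Real.cosh p.2 + c * Real.sinh p.1 * Real.sinh p.2 with hC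
  set g : ℝ × ℝ → ℝ := fun p =>
    (Real.sinh p.1 * Real.cosh p.2 + c * Real.cosh p.1 * Real.sinh p.2) /
      Real.sqrt (C p ^ 2 - 1) with hg
  -- C ≥ 1 on the set
  have hC1 : ∀ p : ℝ × ℝ, 0 < p.1 → 0 < p.2 → 1 ≤ C p := by
    intro p h1 h2
    have hcosh : 1 ≤ Real.cosh (p.1 - p.2) := Real.one_le_cosh _
    have hsub : Real.cosh (p.1 - p.2) =
        Real.cosh p.1 * Real.cosh p.2 - Real.sinh p.1 * Real.sinh p.2 := Real.cosh_sub _ _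
    have hcos : -1 ≤ c := Real.neg_one_le_cos Θ
    have hs1 : 0 < Real.sinh p.1 := Real.sinh_pos_iff.2 h1
    have hs2 : 0 < Real.sinh p.2 := Real.sinh_pos_iff.2 h2
    simp only [hC]
    nlinarith [mul_nonneg (by linarith : (0:ℝ) ≤ c + 1) (mul_nonneg hs1.le hs2.le)]
  -- equality on the set
  have hEq : ∀ p ∈ {p : ℝ × ℝ | 0 < p.1 ∧ 0 < p.2},
      theta2₁ Θ p.1 p.2 = Real.arccos (g p) := by
    rintro p ⟨h1, h2⟩
    have hC1p := hC1 p h1 h2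
    have hcoshd : Real.cosh (dist2 Θ p.1 p.2) = C p := cosh_arcosh hC1p
    have hsinhd : Real.sinh (dist2 Θ p.1 p.2) = Real.sqrt (C p ^ 2 - 1) :=
      sinh_arcosh hC1p
    have hnum : Real.cosh p.1 * C p - Real.cosh p.2 =
        Real.sinh p.1 * (Real.sinh p.1 * Real.cosh p.2 + c * Real.cosh p.1 * Real.sinh p.2) := by
      have h := Real.cosh_sq_sub_sinh_sq p.1
      simp only [hC]
      linear_combination Real.cosh p.2 * h
    have hs1 : Real.sinh p.1 ≠ 0 := ne_of_gt (Real.sinh_pos_iff.2 h1)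
    rw [theta2₁, hcoshd, hsinhd, hnum, mul_div_mul_left _ _ hs1]
  -- the limit of g
  have hCcont : Continuous C := by fun_prop
  have hsinha : 0 < Real.sinh a := Real.sinh_pos_iff.2 ha
  have hC0a : C (0, a) = Real.cosh a := by simp [hC]
  have hsqrt0 : Real.sqrt (C (0, a) ^ 2 - 1) = Real.sinh a := by
    rw [hC0a]
    have : Real.cosh a ^ 2 - 1 = Real.sinh a ^ 2 := by
      have := Real.cosh_sq_sub_sinh_sq a; linarith
    rw [this, Real.sqrt_sq hsinha.le]
  have hgcont : ContinuousAt g (0, a) := by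
    apply ContinuousAt.div
    · fun_prop
    · exact (Real.continuous_sqrt.comp (by fun_prop)).continuousAt
    · rw [hsqrt0]; exact hsinha.ne'
  have hg0 : g (0, a) = c := by
    simp only [hg, hsqrt0]
    simp
    field_simp
  have hmain : Tendsto (fun p => Real.arccos (g p)) (𝓝 ((0 : ℝ), a)) (𝓝 Θ) := by
    have : ContinuousAt (fun p => Real.arccos (g p)) (0, a) :=
      Real.continuous_arccos.continuousAt.comp hgcont
    have h2 := this.tendsto
    rw [hg0, hc, Real.arccos_cos hΘ.1.le hΘ.2.le] at h2
    exact h2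
  refine Tendsto.congr' ?_ (hmain.mono_left nhdsWithin_le_nhds)
  filter_upwards [self_mem_nhdsWithin] with p hp
  exact (hEq p hp).symm
end

section
/- Let U ⊆ ℂ be open and let f be holomorphic on U with |f(z)| < 1 and f'(z) ≠ 0 for all z ∈ U. Then the function u(z) = log(|f'(z)|/(1 − |f(z)|²)) satisfies Δu(z) = (2|f'(z)|/(1 − |f(z)|²))² for every z ∈ U. -/
/-!
Write `u = log ‖f'‖ - log (1 - ‖f‖²)`. Since `f'` is holomorphic without zeros, `log ‖f'‖` is
harmonic, so `Δu = -Δ log (1 - ‖f‖²)`. The second derivative of `log (1 - ‖f‖²)` along the line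
through `z` in a direction `e` with `‖e‖ = 1` involves `f''` only through `⟪f, e² f''⟫`, which
cancels between `e = 1` and `e = I`; the remaining terms add up to `-4 ‖f'‖² / (1 - ‖f‖²)²`.
-/

open Complex Filter Topology InnerProductSpace Laplacian

theorem one_sub_norm_sq_pos {E : Type*} [SeminormedAddGroup E] {x : E} (hx : ‖x‖ < 1) :
    0 < 1 - ‖x‖ ^ 2 :=
  sub_pos.2 (pow_lt_one₀ (norm_nonneg x) hx two_ne_zero)

theorem deriv_deriv_comp_line {E F : Type*} [NormedAddCommGroup E] [NormedSpace ℝ E]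
    [NormedAddCommGroup F] [NormedSpace ℝ F] {u : E → F} {v c : E} {t : ℝ}
    (hu : ContDiffAt ℝ 2 u (t • v + c)) :
    deriv (deriv fun s : ℝ => u (s • v + c)) t = iteratedFDeriv ℝ 2 u (t • v + c) ![v, v] := by
  have hline : ∀ s : ℝ, HasDerivAt (fun s : ℝ => s • v + c) v s := fun s => by
    simpa using ((hasDerivAt_id s).smul_const v).add_const c
  have hfirst : deriv (fun s : ℝ => u (s • v + c)) =ᶠ[𝓝 t] fun s => fderiv ℝ u (s • v + c) v := by
    filter_upwards [(hline t).continuousAt.eventually (hu.eventually (by norm_num))] with s hs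
    exact ((hs.differentiableAt (by norm_num)).hasFDerivAt.comp_hasDerivAt s (hline s)).deriv
  have hsecond : HasDerivAt (fun s : ℝ => fderiv ℝ u (s • v + c))
      (fderiv ℝ (fderiv ℝ u) (t • v + c) v) t :=
    ((hu.fderiv_right (m := 1) (by norm_num)).differentiableAt
      (by norm_num)).hasFDerivAt.comp_hasDerivAt t (hline t)
  rw [hfirst.deriv_eq, iteratedFDeriv_two_apply]
  exact (hsecond.clm_apply (hasDerivAt_const t v)).deriv.trans (by simp)

theorem deriv_deriv_add_deriv_deriv_eq_laplacian {F : Type*} [NormedAddCommGroup F] [NormedSpace ℝ F]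
    {u : ℂ → F} {z : ℂ} (hu : ContDiffAt ℝ 2 u z) :
    deriv (deriv fun x : ℝ => u (x + z.im * I)) z.re +
      deriv (deriv fun y : ℝ => u (z.re + y * I)) z.im = Δ u z := by
  have hz₁ : z.re • (1 : ℂ) + z.im * I = z := by simp [re_add_im]
  have hz₂ : z.im • I + (z.re : ℂ) = z := by simp [add_comm, re_add_im]
  have h₁ := deriv_deriv_comp_line (v := 1) (c := z.im * I) (hz₁ ▸ hu)
  have h₂ := deriv_deriv_comp_line (v := I) (c := (z.re : ℂ)) (hz₂ ▸ hu)
  rw [hz₁] at h₁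
  rw [hz₂] at h₂
  simp only [real_smul, mul_one, add_comm _ (z.re : ℂ)] at h₁ h₂
  rw [laplacian_eq_iteratedFDeriv_complexPlane, h₁, h₂]

theorem HasDerivAt.comp_line {g : ℂ → ℂ} {g' e c : ℂ} {t : ℝ} (hg : HasDerivAt g g' (t • e + c)) :
    HasDerivAt (fun s : ℝ => g (s • e + c)) (e * g') t := by
  simpa [Function.comp_def] using hg.scomp t (((hasDerivAt_id t).smul_const e).add_const c)

namespace AnalyticAt

variable {f : ℂ → ℂ}

theorem contDiffAt_log_one_sub_norm_sq {z : ℂ} (hf : AnalyticAt ℂ f z) (hf1 : ‖f z‖ < 1) :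
    ContDiffAt ℝ 2 (fun w => Real.log (1 - ‖f w‖ ^ 2)) z :=
  (contDiffAt_const.sub (((hf.contDiffAt (n := 2)).restrict_scalars ℝ).norm_sq ℝ)).log
    (one_sub_norm_sq_pos hf1).ne'

theorem deriv_deriv_log_one_sub_norm_sq_comp_line {e c : ℂ} {t : ℝ}
    (hf : AnalyticAt ℂ f (t • e + c)) (hf1 : ‖f (t • e + c)‖ < 1) :
    deriv (deriv fun s : ℝ => Real.log (1 - ‖f (s • e + c)‖ ^ 2)) t =
      -(2 * (⟪f (t • e + c), e * (e * deriv (deriv f) (t • e + c))⟫_ℝ +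
          ⟪e * deriv f (t • e + c), e * deriv f (t • e + c)⟫_ℝ) * (1 - ‖f (t • e + c)‖ ^ 2) +
        (2 * ⟪f (t • e + c), e * deriv f (t • e + c)⟫_ℝ) ^ 2) / (1 - ‖f (t • e + c)‖ ^ 2) ^ 2 := by
  have hnear : ∀ᶠ s : ℝ in 𝓝 t, AnalyticAt ℂ f (s • e + c) ∧ ‖f (s • e + c)‖ < 1 :=
    (by fun_prop : Continuous fun s : ℝ => s • e + c).continuousAt.eventually
      (hf.eventually_analyticAt.and
        ((continuous_norm.continuousAt.comp hf.continuousAt).eventually_lt continuousAt_const hf1))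
  have hfirst : deriv (fun s : ℝ => Real.log (1 - ‖f (s • e + c)‖ ^ 2)) =ᶠ[𝓝 t]
      fun s => -(2 * ⟪f (s • e + c), e * deriv f (s • e + c)⟫_ℝ) / (1 - ‖f (s • e + c)‖ ^ 2) := by
    filter_upwards [hnear] with s hs
    exact ((hs.1.differentiableAt.hasDerivAt.comp_line.norm_sq.const_sub 1).log
      (one_sub_norm_sq_pos hs.2).ne').deriv
  have hF := hf.differentiableAt.hasDerivAt.comp_line
  have hF' := hf.deriv.differentiableAt.hasDerivAt.comp_line.const_mul e
  rw [hfirst.deriv_eq]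
  refine (((hF.inner ℝ hF').const_mul 2).neg.div (hF.norm_sq.const_sub 1)
    (one_sub_norm_sq_pos hf1).ne').deriv.trans ?_
  simp only [Pi.neg_apply]
  ring

theorem laplacian_log_one_sub_norm_sq {z : ℂ} (hf : AnalyticAt ℂ f z) (hf1 : ‖f z‖ < 1) :
    Δ (fun w => Real.log (1 - ‖f w‖ ^ 2)) z = -(2 * ‖deriv f z‖ / (1 - ‖f z‖ ^ 2)) ^ 2 := by
  have hz : ∀ e : ℂ, (0 : ℝ) • e + z = z := by simp
  have hdir : ∀ e : ℂ, iteratedFDeriv ℝ 2 (fun w => Real.log (1 - ‖f w‖ ^ 2)) z ![e, e] =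
      -(2 * (⟪f z, e * (e * deriv (deriv f) z)⟫_ℝ + ⟪e * deriv f z, e * deriv f z⟫_ℝ) *
          (1 - ‖f z‖ ^ 2) + (2 * ⟪f z, e * deriv f z⟫_ℝ) ^ 2) / (1 - ‖f z‖ ^ 2) ^ 2 := by
    intro e
    have h := deriv_deriv_comp_line (t := 0) (v := e) (c := z)
      (by rw [hz]; exact hf.contDiffAt_log_one_sub_norm_sq hf1)
    rw [hz] at h
    rw [← h, deriv_deriv_log_one_sub_norm_sq_comp_line (by rwa [hz]) (by rwa [hz]), hz]
  have hden := (one_sub_norm_sq_pos hf1).ne'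
  rw [laplacian_eq_iteratedFDeriv_complexPlane]
  dsimp only
  rw [hdir, hdir]
  simp only [div_pow, mul_pow, Complex.sq_norm, normSq_apply, Complex.inner, mul_re, mul_im,
    conj_re, conj_im, I_re, I_im, one_re, one_im] at hden ⊢
  field_simp
  ring

end AnalyticAt

/-- For `f` holomorphic on an open set `U ⊆ ℂ` with `|f| < 1` and `f' ≠ 0` on `U`, the
function `u(z) = log (|f'(z)|/(1 − |f(z)|²))` satisfies
`Δu(z) = ∂²u/∂x² + ∂²u/∂y² = (2|f'(z)|/(1 − |f(z)|²))²` on `U`. -/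
theorem laplacian_log_pullback_density
    (U : Set ℂ) (hU : IsOpen U) (f : ℂ → ℂ)
    (hf : DifferentiableOn ℂ f U)
    (hfb : ∀ z ∈ U, ‖f z‖ < 1)
    (hf' : ∀ z ∈ U, deriv f z ≠ 0) :
    ∀ z ∈ U,
      deriv (deriv (fun x : ℝ =>
          Real.log (‖deriv f ((x : ℂ) + z.im * Complex.I)‖ /
            (1 - ‖f ((x : ℂ) + z.im * Complex.I)‖ ^ 2)))) z.re +
      deriv (deriv (fun y : ℝ =>
          Real.log (‖deriv f ((z.re : ℂ) + y * Complex.I)‖ /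
            (1 - ‖f ((z.re : ℂ) + y * Complex.I)‖ ^ 2)))) z.im =
      (2 * ‖deriv f z‖ / (1 - ‖f z‖ ^ 2)) ^ 2 := by
  intro z hz
  have hfz : AnalyticAt ℂ f z := hf.analyticAt (hU.mem_nhds hz)
  have hharm := hfz.deriv.harmonicAt_log_norm (hf' z hz)
  have hpot := hfz.contDiffAt_log_one_sub_norm_sq (hfb z hz)
  have hsplit : (fun w => Real.log (‖deriv f w‖ / (1 - ‖f w‖ ^ 2))) =ᶠ[𝓝 z]
      (fun w => Real.log ‖deriv f w‖) - fun w => Real.log (1 - ‖f w‖ ^ 2) := by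
    filter_upwards [hfz.deriv.continuousAt.eventually_ne (hf' z hz),
      (continuous_norm.continuousAt.comp hfz.continuousAt).eventually_lt continuousAt_const
        (hfb z hz)] with w hw₀ hw₁
    exact Real.log_div (norm_ne_zero_iff.mpr hw₀) (one_sub_norm_sq_pos hw₁).ne'
  rw [deriv_deriv_add_deriv_deriv_eq_laplacian ((hharm.1.sub hpot).congr_of_eventuallyEq hsplit),
    (laplacian_congr_nhds hsplit).eq_of_nhds, hharm.1.laplacian_sub hpot, hharm.2.eq_of_nhds,
    hfz.laplacian_log_one_sub_norm_sq (hfb z hz)]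
  simp
end

section
/- Let Ω be an open subset of the open unit disc 𝔻 = {z ∈ ℂ : |z| < 1} and let φ be holomorphic on Ω with |φ(z)| < 1 and φ'(z) ≠ 0 for all z ∈ Ω. If the function z ↦ M(φ; z) attains a local minimum at a point z₀ ∈ Ω, then M(φ; z₀) ≥ 1. -/
/-!
Write `log M(φ; z) = log |φ'(z)| + log (1 - |z|²) - log (1 - |φ(z)|²)`. The first summand is
harmonic, and for holomorphic `g` the Laplacian of `log (1 - |g|²)` is `-4 |g'|² / (1 - |g|²)²`;
for `g = id` this is `-4 / (1 - |z|²)²`. At a local minimum the Laplacian of `log M` is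
nonnegative, i.e. `|φ'|² / (1 - |φ|²)² ≥ 1 / (1 - |z|²)²`, which says `M(φ; z₀) ≥ 1`.
-/

open Metric

/-- For a holomorphic map `f` into the unit disc, `M(f; z) = |f'(z)| (1 − |z|²) / (1 − |f(z)|²)`. -/
noncomputable def MQ (f : ℂ → ℂ) (z : ℂ) : ℝ :=
  ‖deriv f z‖ * (1 - ‖z‖ ^ 2) / (1 - ‖f z‖ ^ 2)

open Filter Topology
open scoped InnerProductSpace

theorem IsLocalMin.nonneg_of_hasDerivAt_of_hasDerivAt {f f' : ℝ → ℝ} {x m : ℝ}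
    (hmin : IsLocalMin f x) (hf : ∀ᶠ y in 𝓝 x, HasDerivAt f (f' y) y) (hf' : HasDerivAt f' m x) :
    0 ≤ m := by
  by_contra! hm
  -- `m < 0` makes `x` a local maximum as well, so `f` is locally constant and `m = 0`
  have hderiv : deriv f =ᶠ[𝓝 x] f' := hf.mono fun y hy => hy.deriv
  have hmax : IsLocalMax f x := isLocalMax_of_deriv_deriv_neg
    (by rwa [hderiv.deriv_eq, hf'.deriv])
    (by rw [hderiv.eq_of_nhds]; exact hmin.hasDerivAt_eq_zero hf.self_of_nhds)
    hf.self_of_nhds.continuousAt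
  have hconst : f =ᶠ[𝓝 x] fun _ => f x := (hmin.and hmax).mono fun y hy => le_antisymm hy.2 hy.1
  have hzero : f' =ᶠ[𝓝 x] fun _ => 0 := by
    filter_upwards [hconst.eventually_nhds, hf] with y hy hy'
    exact hy'.unique ((hasDerivAt_const y (f x)).congr_of_eventuallyEq hy)
  exact hm.ne (hf'.unique ((hasDerivAt_const x 0).congr_of_eventuallyEq hzero))

section SecondLineDeriv

variable {E : Type*} [NormedAddCommGroup E] [NormedSpace ℝ E]

def HasSecondLineDerivAt (u : E → ℝ) (d : ℝ) (x v : E) : Prop :=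
  ∃ D : E → ℝ, (∀ᶠ y in 𝓝 x, HasLineDerivAt ℝ u (D y) y v) ∧ HasLineDerivAt ℝ D d x v

variable {u w : E → ℝ} {d e : ℝ} {x v : E}

theorem HasSecondLineDerivAt.add (hu : HasSecondLineDerivAt u d x v)
    (hw : HasSecondLineDerivAt w e x v) :
    HasSecondLineDerivAt (fun y => u y + w y) (d + e) x v := by
  obtain ⟨D, hD, hd⟩ := hu
  obtain ⟨D', hD', he⟩ := hw
  exact ⟨fun y => D y + D' y, (hD.and hD').mono fun y hy => hy.1.add hy.2, hd.add he⟩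

theorem HasSecondLineDerivAt.sub (hu : HasSecondLineDerivAt u d x v)
    (hw : HasSecondLineDerivAt w e x v) :
    HasSecondLineDerivAt (fun y => u y - w y) (d - e) x v := by
  obtain ⟨D, hD, hd⟩ := hu
  obtain ⟨D', hD', he⟩ := hw
  exact ⟨fun y => D y - D' y, (hD.and hD').mono fun y hy => hy.1.sub hy.2, hd.sub he⟩

theorem IsLocalMin.nonneg_of_hasSecondLineDerivAt (hmin : IsLocalMin u x)
    (hu : HasSecondLineDerivAt u d x v) : 0 ≤ d := by
  obtain ⟨D, hD, hd⟩ := hu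
  have hline : Continuous fun t : ℝ => x + t • v := by fun_prop
  refine IsLocalMin.nonneg_of_hasDerivAt_of_hasDerivAt (f' := fun t => D (x + t • v))
    (IsLocalMin.comp_continuous (g := fun t : ℝ => x + t • v) (b := 0) (by simpa using hmin)
      hline.continuousAt) ?_ hd
  have hline_tendsto : Tendsto (fun t : ℝ => x + t • v) (𝓝 0) (𝓝 x) := by
    simpa using hline.tendsto 0
  filter_upwards [hline_tendsto.eventually hD] with t ht
  have ht' : HasDerivAt (fun s : ℝ => u (x + t • v + s • v)) (D (x + t • v)) (t - t) := by
    rw [sub_self]; exact ht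
  have h := ht'.comp_sub_const t t
  simp only [add_assoc, ← add_smul, add_sub_cancel] at h
  exact h

end SecondLineDeriv

section Laplacian

variable {u w : ℂ → ℝ} {Δ Δ' : ℝ} {z : ℂ}

/-- The Laplacian as the sum of the second derivatives along `1` and `I`: the form the
second-derivative test needs, without the `C²` hypothesis behind `InnerProductSpace.laplacian`. -/
def HasLaplacianAt (u : ℂ → ℝ) (Δ : ℝ) (z : ℂ) : Prop :=
  ∃ d₁ d₂, HasSecondLineDerivAt u d₁ z 1 ∧ HasSecondLineDerivAt u d₂ z Complex.I ∧ d₁ + d₂ = Δ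

theorem HasLaplacianAt.add (hu : HasLaplacianAt u Δ z) (hw : HasLaplacianAt w Δ' z) :
    HasLaplacianAt (fun y => u y + w y) (Δ + Δ') z := by
  obtain ⟨d₁, d₂, h₁, h₂, rfl⟩ := hu
  obtain ⟨e₁, e₂, k₁, k₂, rfl⟩ := hw
  exact ⟨d₁ + e₁, d₂ + e₂, h₁.add k₁, h₂.add k₂, by ring⟩

theorem HasLaplacianAt.sub (hu : HasLaplacianAt u Δ z) (hw : HasLaplacianAt w Δ' z) :
    HasLaplacianAt (fun y => u y - w y) (Δ - Δ') z := by
  obtain ⟨d₁, d₂, h₁, h₂, rfl⟩ := hu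
  obtain ⟨e₁, e₂, k₁, k₂, rfl⟩ := hw
  exact ⟨d₁ - e₁, d₂ - e₂, h₁.sub k₁, h₂.sub k₂, by ring⟩

theorem IsLocalMin.laplacian_nonneg (hmin : IsLocalMin u z) (hu : HasLaplacianAt u Δ z) :
    0 ≤ Δ := by
  obtain ⟨d₁, d₂, h₁, h₂, rfl⟩ := hu
  exact add_nonneg (hmin.nonneg_of_hasSecondLineDerivAt h₁)
    (hmin.nonneg_of_hasSecondLineDerivAt h₂)

end Laplacian

section Curves

variable {F : Type*} [NormedAddCommGroup F] [InnerProductSpace ℝ F] {γ : ℝ → F} {γ' : F} {t : ℝ}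

theorem HasDerivAt.log_norm (hγ : HasDerivAt γ γ' t) (h0 : γ t ≠ 0) :
    HasDerivAt (fun s => Real.log ‖γ s‖) (⟪γ t, γ'⟫_ℝ / ‖γ t‖ ^ 2) t := by
  have hlog : (fun s => Real.log ‖γ s‖) = fun s => Real.log (‖γ s‖ ^ 2) / 2 := by
    ext s; rw [Real.log_pow]; push_cast; ring
  rw [hlog]
  exact ((hγ.norm_sq.log (by positivity)).div_const 2).congr_deriv (by ring)

theorem HasDerivAt.log_one_sub_norm_sq (hγ : HasDerivAt γ γ' t) (h1 : ‖γ t‖ < 1) :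
    HasDerivAt (fun s => Real.log (1 - ‖γ s‖ ^ 2)) (-(2 * ⟪γ t, γ'⟫_ℝ) / (1 - ‖γ t‖ ^ 2)) t :=
  (hγ.norm_sq.const_sub 1).log (by nlinarith [norm_nonneg (γ t)])

end Curves

theorem HasDerivAt.hasLineDerivAt_real {g : ℂ → ℂ} {g' z : ℂ} (hg : HasDerivAt g g' z) (v : ℂ) :
    HasLineDerivAt ℝ g (g' * v) z v := by
  simpa [mul_comm] using (hg.hasFDerivAt.restrictScalars ℝ).hasLineDerivAt v

theorem Complex.re_div_eq_inner (a b : ℂ) : (a / b).re = ⟪b, a⟫_ℝ / ‖b‖ ^ 2 := by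
  simp only [Complex.div_re, Complex.inner, Complex.mul_re, Complex.conj_re, Complex.conj_im,
    mul_neg, sub_neg_eq_add, Complex.sq_norm]
  ring

theorem Complex.inner_sq_add_inner_mul_I_sq (a b : ℂ) :
    ⟪a, b⟫_ℝ ^ 2 + ⟪a, b * Complex.I⟫_ℝ ^ 2 = ‖a‖ ^ 2 * ‖b‖ ^ 2 := by
  simp only [Complex.inner, Complex.sq_norm, Complex.normSq_apply, Complex.mul_re, Complex.mul_im,
    Complex.conj_re, Complex.conj_im, Complex.I_re, Complex.I_im]
  ring

section Holomorphic

variable {g : ℂ → ℂ} {z : ℂ}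

theorem AnalyticAt.hasSecondLineDerivAt_log_norm (hg : AnalyticAt ℂ g z) (hz : g z ≠ 0) (v : ℂ) :
    HasSecondLineDerivAt (fun w => Real.log ‖g w‖) (deriv (logDeriv g) z * v ^ 2).re z v := by
  refine ⟨fun w => (logDeriv g w * v).re, ?_, ?_⟩
  · have hnear : ∀ᶠ w in 𝓝 z, DifferentiableAt ℂ g w ∧ g w ≠ 0 :=
      (hg.eventually_analyticAt.mono fun w hw => hw.differentiableAt).and
        (hg.continuousAt.eventually_ne hz)
    filter_upwards [hnear] with w ⟨hdiff, hw⟩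
    have h := (hdiff.hasDerivAt.hasLineDerivAt_real v).log_norm (by simpa using hw)
    simp only [zero_smul, add_zero] at h
    rwa [logDeriv_apply, div_mul_eq_mul_div, Complex.re_div_eq_inner]
  · have hlog : AnalyticAt ℂ (logDeriv g) z := hg.deriv.div hg hz
    have h := (hlog.differentiableAt.hasDerivAt.hasLineDerivAt_real v).mul_const v
    exact (Complex.reCLM.hasFDerivAt.comp_hasDerivAt 0 h).congr_deriv (by simp [sq, mul_assoc])

theorem AnalyticAt.hasSecondLineDerivAt_log_one_sub_norm_sq (hg : AnalyticAt ℂ g z)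
    (hz : ‖g z‖ < 1) (v : ℂ) :
    HasSecondLineDerivAt (fun w => Real.log (1 - ‖g w‖ ^ 2))
      (-(2 * (⟪g z, deriv (deriv g) z * v * v⟫_ℝ + ‖deriv g z * v‖ ^ 2) * (1 - ‖g z‖ ^ 2)
        + 4 * ⟪g z, deriv g z * v⟫_ℝ ^ 2) / (1 - ‖g z‖ ^ 2) ^ 2) z v := by
  refine ⟨fun w => -(2 * ⟪g w, deriv g w * v⟫_ℝ) / (1 - ‖g w‖ ^ 2), ?_, ?_⟩
  · have hnear : ∀ᶠ w in 𝓝 z, DifferentiableAt ℂ g w ∧ ‖g w‖ < 1 :=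
      (hg.eventually_analyticAt.mono fun w hw => hw.differentiableAt).and
        (hg.continuousAt.norm.eventually_lt continuousAt_const hz)
    filter_upwards [hnear] with w ⟨hdiff, hw⟩
    have h := (hdiff.hasDerivAt.hasLineDerivAt_real v).log_one_sub_norm_sq (by simpa using hw)
    simp only [zero_smul, add_zero] at h
    exact h
  · have hp : 0 < 1 - ‖g z‖ ^ 2 := by nlinarith [norm_nonneg (g z)]
    have hγ := hg.differentiableAt.hasDerivAt.hasLineDerivAt_real v
    have hδ := (hg.deriv.differentiableAt.hasDerivAt.hasLineDerivAt_real v).mul_const v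
    have hnum := ((hγ.inner ℝ hδ).const_mul 2).neg
    have hden := hγ.norm_sq.const_sub 1
    have h := hnum.div hden (by simpa using hp.ne')
    simp only [zero_smul, add_zero, Pi.neg_apply] at h
    refine h.congr_deriv ?_
    rw [real_inner_self_eq_norm_sq]
    ring

theorem AnalyticAt.hasLaplacianAt_log_norm (hg : AnalyticAt ℂ g z) (hz : g z ≠ 0) :
    HasLaplacianAt (fun w => Real.log ‖g w‖) 0 z :=
  ⟨_, _, hg.hasSecondLineDerivAt_log_norm hz 1, hg.hasSecondLineDerivAt_log_norm hz Complex.I,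
    by simp⟩

theorem AnalyticAt.hasLaplacianAt_log_one_sub_norm_sq (hg : AnalyticAt ℂ g z) (hz : ‖g z‖ < 1) :
    HasLaplacianAt (fun w => Real.log (1 - ‖g w‖ ^ 2))
      (-4 * ‖deriv g z‖ ^ 2 / (1 - ‖g z‖ ^ 2) ^ 2) z := by
  refine ⟨_, _, hg.hasSecondLineDerivAt_log_one_sub_norm_sq hz 1,
    hg.hasSecondLineDerivAt_log_one_sub_norm_sq hz Complex.I, ?_⟩
  have hI := Complex.inner_sq_add_inner_mul_I_sq (g z) (deriv g z)
  simp only [mul_one, mul_assoc, Complex.I_mul_I, mul_neg_one, inner_neg_right, norm_mul,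
    Complex.norm_I]
  rw [← add_div]
  congr 1
  linear_combination (-4) * hI

end Holomorphic

section MQ

variable {φ : ℂ → ℂ} {z : ℂ}

theorem MQ_pos (hφ' : deriv φ z ≠ 0) (hz : ‖z‖ < 1) (hφ : ‖φ z‖ < 1) : 0 < MQ φ z := by
  have h₁ : 0 < 1 - ‖z‖ ^ 2 := by nlinarith [norm_nonneg z]
  have h₂ : 0 < 1 - ‖φ z‖ ^ 2 := by nlinarith [norm_nonneg (φ z)]
  exact div_pos (mul_pos (norm_pos_iff.2 hφ') h₁) h₂

theorem log_MQ (hφ' : deriv φ z ≠ 0) (hz : ‖z‖ < 1) (hφ : ‖φ z‖ < 1) :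
    Real.log (MQ φ z) =
      Real.log ‖deriv φ z‖ + Real.log (1 - ‖z‖ ^ 2) - Real.log (1 - ‖φ z‖ ^ 2) := by
  have h₁ : 0 < 1 - ‖z‖ ^ 2 := by nlinarith [norm_nonneg z]
  have h₂ : 0 < 1 - ‖φ z‖ ^ 2 := by nlinarith [norm_nonneg (φ z)]
  rw [MQ, Real.log_div (by positivity) h₂.ne', Real.log_mul (by simpa using hφ') h₁.ne']

theorem one_le_MQ_of_inv_sq_le (hz : ‖z‖ < 1) (hφ : ‖φ z‖ < 1)
    (h : 1 / (1 - ‖z‖ ^ 2) ^ 2 ≤ ‖deriv φ z‖ ^ 2 / (1 - ‖φ z‖ ^ 2) ^ 2) : 1 ≤ MQ φ z := by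
  have h₁ : 0 < 1 - ‖z‖ ^ 2 := by nlinarith [norm_nonneg z]
  have h₂ : 0 < 1 - ‖φ z‖ ^ 2 := by nlinarith [norm_nonneg (φ z)]
  rw [div_le_div_iff₀ (by positivity) (by positivity), one_mul, ← mul_pow] at h
  rw [MQ, le_div_iff₀ h₂, one_mul]
  exact (pow_le_pow_iff_left₀ h₂.le (by positivity) two_ne_zero).1 h

end MQ

theorem M_local_min_ge_one
    (Ω : Set ℂ) (hΩopen : IsOpen Ω) (hΩsub : Ω ⊆ ball (0 : ℂ) 1)
    (φ : ℂ → ℂ) (hφdiff : DifferentiableOn ℂ φ Ω)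
    (hφbound : ∀ z ∈ Ω, ‖φ z‖ < 1)
    (hφ' : ∀ z ∈ Ω, deriv φ z ≠ 0)
    (z₀ : ℂ) (hz₀ : z₀ ∈ Ω)
    (hmin : IsLocalMinOn (fun z => MQ φ z) Ω z₀) :
    1 ≤ MQ φ z₀ := by
  have hΩ : Ω ∈ 𝓝 z₀ := hΩopen.mem_nhds hz₀
  have hφ : AnalyticAt ℂ φ z₀ := hφdiff.analyticAt hΩ
  have hz : ‖z₀‖ < 1 := by simpa using hΩsub hz₀
  have hlog : ∀ᶠ z in 𝓝 z₀, Real.log (MQ φ z) =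
      Real.log ‖deriv φ z‖ + Real.log (1 - ‖z‖ ^ 2) - Real.log (1 - ‖φ z‖ ^ 2) := by
    filter_upwards [hΩ] with z hz
    exact log_MQ (hφ' z hz) (by simpa using hΩsub hz) (hφbound z hz)
  have hu : IsLocalMin (fun z =>
      Real.log ‖deriv φ z‖ + Real.log (1 - ‖z‖ ^ 2) - Real.log (1 - ‖φ z‖ ^ 2)) z₀ := by
    filter_upwards [hmin.isLocalMin hΩ, hlog] with z hle hz_log
    rw [← hz_log, ← hlog.self_of_nhds]
    exact Real.log_le_log (MQ_pos (hφ' z₀ hz₀) hz (hφbound z₀ hz₀)) hle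
  have hΔ := ((hφ.deriv.hasLaplacianAt_log_norm (hφ' z₀ hz₀)).add
    ((analyticAt_id : AnalyticAt ℂ (fun w => w) z₀).hasLaplacianAt_log_one_sub_norm_sq hz)).sub
    (hφ.hasLaplacianAt_log_one_sub_norm_sq (hφbound z₀ hz₀))
  have hΔ_nonneg := hu.laplacian_nonneg hΔ
  simp only [deriv_id, id_eq, norm_one, one_pow] at hΔ_nonneg
  exact one_le_MQ_of_inv_sq_le hz (hφbound z₀ hz₀) (by linear_combination hΔ_nonneg / 4)
end
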